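/- arXiv:1107.3683 — 4 statements merged into one kernel-verified Lean document; each statement's English description precedes it below -/
import Mathlib

section
/- Let K be a symmetric convex body in ℝ^n of volume 1, let 1 ≤ p < ∞ and θ ∈ S^{n−1}. Then B(p+1, n)^{1/p} ≤ h_{Z_p(K)}(θ)/h_K(θ) ≤ (n/(p+1))^{1/p}, where B(x,y) = Γ(x)Γ(y)/Γ(x+y) is the Beta function. -/
open MeasureTheory Filter Set Metric
open scoped RealInnerProductSpace Topology ENNReal NNReal

noncomputable section

/-- Euclidean space `ℝ^n`. -/
abbrev Euc (n : ℕ) := EuclideanSpace ℝ (Fin n)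

/-- The support function `h_K(θ) = sup_{x ∈ K} ⟨x, θ⟩` of a set `K ⊆ ℝ^n`. -/
noncomputable def suppFn {n : ℕ} (K : Set (Euc n)) (θ : Euc n) : ℝ :=
  sSup ((fun x => ⟪x, θ⟫) '' K)

/-!
Let `h = h_K(θ) = ⟪x₀, θ⟫` with `x₀ ∈ K`, and compare the distribution function of `|⟪x, θ⟫|`
on `K` with explicit profiles. By convexity the homothetic copies
`±((t/h) x₀ + (1 - t/h) (K ∩ {±⟪x, θ⟫ ≥ 0}))` lie in `{|⟪x, θ⟫| ≥ t}`, which therefore has volume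
at least `(1 - t/h)^n`; and `(t/h) K ⊆ {|⟪x, θ⟫| ≤ t}`, so `{|⟪x, θ⟫| > t}` has volume at most
`1 - (t/h)^n`. Integrating both bounds against `p t^(p-1) dt` (layer cake formula) gives
`h^p n B(p+1, n) ≤ ∫_K |⟪x, θ⟫|^p ≤ h^p n / (p + n)`.
-/

open scoped Pointwise
open ProbabilityTheory

theorem intervalIntegral_rpow_mul_one_sub_rpow_eq_beta {a b : ℝ} (ha : 0 < a) (hb : 0 < b) :
    ∫ u in (0 : ℝ)..1, u ^ (a - 1) * (1 - u) ^ (b - 1) = beta a b := by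
  rw [beta_eq_betaIntegralReal a b ha hb, Complex.betaIntegral]
  have hcongr : EqOn (fun u : ℝ ↦ ((u ^ (a - 1) * (1 - u) ^ (b - 1) : ℝ) : ℂ))
      (fun u : ℝ ↦ (u : ℂ) ^ ((a : ℂ) - 1) * (1 - (u : ℂ)) ^ ((b : ℂ) - 1)) (uIcc 0 1) := by
    intro u hu
    rw [uIcc_of_le zero_le_one] at hu
    push_cast [Complex.ofReal_cpow hu.1, Complex.ofReal_cpow (sub_nonneg.2 hu.2)]
    rfl
  rw [← intervalIntegral.integral_congr hcongr, intervalIntegral.integral_ofReal,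
    Complex.ofReal_re]

theorem mul_beta_add_one_right {a b : ℝ} (ha : 0 < a) (hb : 0 < b) :
    a * beta a (b + 1) = b * beta (a + 1) b := by
  have hab : a + 1 + b = a + (b + 1) := by ring
  simp only [beta, Real.Gamma_add_one ha.ne', Real.Gamma_add_one hb.ne', hab]
  ring

theorem intervalIntegral_rpow_mul_comp_div {p h : ℝ} (hh : 0 < h) (φ : ℝ → ℝ) :
    ∫ t in (0 : ℝ)..h, t ^ (p - 1) * φ (t / h) = h ^ p * ∫ u in (0 : ℝ)..1, u ^ (p - 1) * φ u := by
  have hcongr : EqOn (fun t ↦ t ^ (p - 1) * φ (t / h))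
      (fun t ↦ h ^ (p - 1) * ((t / h) ^ (p - 1) * φ (t / h))) (uIcc 0 h) := by
    intro t ht
    rw [uIcc_of_le hh.le] at ht
    simp only [Real.div_rpow ht.1 hh.le]
    field_simp [(Real.rpow_pos_of_pos hh (p - 1)).ne']
  rw [intervalIntegral.integral_congr hcongr, intervalIntegral.integral_const_mul,
    intervalIntegral.integral_comp_div (fun u ↦ u ^ (p - 1) * φ u) hh.ne', zero_div,
    div_self hh.ne', smul_eq_mul, ← mul_assoc, ← Real.rpow_add_one hh.ne', sub_add_cancel]

theorem mul_intervalIntegral_rpow_mul_one_sub_pow {p : ℝ} (hp : 0 < p) (d : ℕ) :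
    p * ∫ u in (0 : ℝ)..1, u ^ (p - 1) * (1 - u ^ d) = d / (p + d) := by
  have hd : (0 : ℝ) ≤ d := d.cast_nonneg
  have hcongr : EqOn (fun u : ℝ ↦ u ^ (p - 1) * (1 - u ^ d))
      (fun u ↦ u ^ (p - 1) - u ^ (p + d - 1)) (Ioc 0 1) := by
    intro u hu
    dsimp only
    rw [mul_one_sub, ← Real.rpow_natCast, ← Real.rpow_add hu.1]
    ring_nf
  rw [intervalIntegral.integral_of_le zero_le_one, setIntegral_congr_fun measurableSet_Ioc hcongr,
    ← intervalIntegral.integral_of_le zero_le_one, intervalIntegral.integral_sub,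
    integral_rpow (by left; linarith), integral_rpow (by left; linarith)]
  · simp only [sub_add_cancel, Real.one_rpow, Real.zero_rpow hp.ne',
      Real.zero_rpow (by positivity : p + d ≠ 0)]
    field_simp
    ring
  · exact intervalIntegral.intervalIntegrable_rpow' (by linarith)
  · exact intervalIntegral.intervalIntegrable_rpow' (by linarith)

section Layercake

variable {α : Type*} [MeasurableSpace α] {μ : Measure α} {f : α → ℝ} {g : ℝ → ℝ} {p h : ℝ}

theorem setLIntegral_Ioo_ofReal_mul_ofReal_rpow (hh : 0 ≤ h)
    (hg_int : IntervalIntegrable (fun t ↦ t ^ (p - 1) * g t) volume 0 h)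
    (hg_nn : ∀ t ∈ Ioo 0 h, 0 ≤ g t) :
    ∫⁻ t in Ioo 0 h, ENNReal.ofReal (g t) * ENNReal.ofReal (t ^ (p - 1)) =
      ENNReal.ofReal (∫ t in (0 : ℝ)..h, t ^ (p - 1) * g t) := by
  rw [intervalIntegral.integral_of_le hh, integral_Ioc_eq_integral_Ioo,
    ofReal_integral_eq_lintegral_ofReal]
  · refine setLIntegral_congr_fun measurableSet_Ioo fun t ht ↦ ?_
    rw [← ENNReal.ofReal_mul (hg_nn t ht), mul_comm]
  · exact (hg_int.1).mono_set Ioo_subset_Ioc_self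
  · filter_upwards [ae_restrict_mem measurableSet_Ioo] with t ht
    exact mul_nonneg (Real.rpow_nonneg ht.1.le _) (hg_nn t ht)

theorem mul_intervalIntegral_le_integral_rpow (hf_nn : 0 ≤ᵐ[μ] f) (hf : AEMeasurable f μ)
    (hfp : Integrable (fun x ↦ f x ^ p) μ) (hp : 0 < p) (hh : 0 ≤ h)
    (hg_int : IntervalIntegrable (fun t ↦ t ^ (p - 1) * g t) volume 0 h)
    (hg_nn : ∀ t ∈ Ioo 0 h, 0 ≤ g t)
    (hg : ∀ t ∈ Ioo 0 h, ENNReal.ofReal (g t) ≤ μ {x | t ≤ f x}) :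
    p * ∫ t in (0 : ℝ)..h, t ^ (p - 1) * g t ≤ ∫ x, f x ^ p ∂μ := by
  have hlayer := lintegral_rpow_eq_lintegral_meas_le_mul μ hf_nn hf hp
  have hfin := hfp.lintegral_lt_top
  rw [hlayer] at hfin
  rw [integral_eq_lintegral_of_nonneg_ae (hf_nn.mono fun x hx ↦ Real.rpow_nonneg hx p)
    hfp.aestronglyMeasurable, hlayer, ← ENNReal.ofReal_le_iff_le_toReal hfin.ne,
    ENNReal.ofReal_mul hp.le, ← setLIntegral_Ioo_ofReal_mul_ofReal_rpow hh hg_int hg_nn]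
  gcongr ENNReal.ofReal p * ?_
  calc ∫⁻ t in Ioo 0 h, ENNReal.ofReal (g t) * ENNReal.ofReal (t ^ (p - 1))
      ≤ ∫⁻ t in Ioo 0 h, μ {x | t ≤ f x} * ENNReal.ofReal (t ^ (p - 1)) :=
        setLIntegral_mono' measurableSet_Ioo fun t ht ↦ by gcongr; exact hg t ht
    _ ≤ ∫⁻ t in Ioi 0, μ {x | t ≤ f x} * ENNReal.ofReal (t ^ (p - 1)) :=
        lintegral_mono_set Ioo_subset_Ioi_self

theorem integral_rpow_le_mul_intervalIntegral (hf_nn : 0 ≤ᵐ[μ] f) (hf : AEMeasurable f μ)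
    (hfh : ∀ᵐ x ∂μ, f x ≤ h) (hp : 0 < p) (hh : 0 ≤ h)
    (hg_int : IntervalIntegrable (fun t ↦ t ^ (p - 1) * g t) volume 0 h)
    (hg_nn : ∀ t ∈ Ioo 0 h, 0 ≤ g t)
    (hg : ∀ t ∈ Ioo 0 h, μ {x | t < f x} ≤ ENNReal.ofReal (g t)) :
    ∫ x, f x ^ p ∂μ ≤ p * ∫ t in (0 : ℝ)..h, t ^ (p - 1) * g t := by
  have hrhs : 0 ≤ ∫ t in (0 : ℝ)..h, t ^ (p - 1) * g t := by
    rw [intervalIntegral.integral_of_le hh, integral_Ioc_eq_integral_Ioo]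
    exact setIntegral_nonneg measurableSet_Ioo fun t ht ↦
      mul_nonneg (Real.rpow_nonneg ht.1.le _) (hg_nn t ht)
  have htail : ∫⁻ t in Ici h, μ {x | t < f x} * ENNReal.ofReal (t ^ (p - 1)) = 0 := by
    refine setLIntegral_eq_zero measurableSet_Ici fun t (ht : h ≤ t) ↦ ?_
    have hnull : μ {x | t < f x} = 0 :=
      measure_eq_zero_iff_ae_notMem.2 (hfh.mono fun x hx ↦ not_lt.2 (hx.trans ht))
    simp [hnull]
  rw [integral_eq_lintegral_of_nonneg_ae (hf_nn.mono fun x hx ↦ Real.rpow_nonneg hx p)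
    (hf.pow_const p).aestronglyMeasurable]
  refine ENNReal.toReal_le_of_le_ofReal (mul_nonneg hp.le hrhs) ?_
  rw [lintegral_rpow_eq_lintegral_meas_lt_mul μ hf_nn hf hp, ENNReal.ofReal_mul hp.le,
    ← setLIntegral_Ioo_ofReal_mul_ofReal_rpow hh hg_int hg_nn]
  gcongr ENNReal.ofReal p * ?_
  calc ∫⁻ t in Ioi 0, μ {x | t < f x} * ENNReal.ofReal (t ^ (p - 1))
      ≤ ∫⁻ t in Ioo 0 h ∪ Ici h, μ {x | t < f x} * ENNReal.ofReal (t ^ (p - 1)) :=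
        lintegral_mono_set fun t (ht : 0 < t) ↦ (lt_or_ge t h).imp (⟨ht, ·⟩) id
    _ ≤ ∫⁻ t in Ioo 0 h, μ {x | t < f x} * ENNReal.ofReal (t ^ (p - 1)) := by
        grw [lintegral_union_le, htail, add_zero]
    _ ≤ ∫⁻ t in Ioo 0 h, ENNReal.ofReal (g t) * ENNReal.ofReal (t ^ (p - 1)) :=
        setLIntegral_mono' measurableSet_Ioo fun t ht ↦ by gcongr; exact hg t ht

end Layercake

theorem abs_inner_le_of_forall_inner_le {E : Type*} [NormedAddCommGroup E] [InnerProductSpace ℝ E]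
    {K : Set E} {θ : E} {h : ℝ} (hsymm : ∀ x ∈ K, -x ∈ K) (hmax : ∀ x ∈ K, ⟪x, θ⟫ ≤ h) :
    ∀ x ∈ K, |⟪x, θ⟫| ≤ h := fun x hx ↦
  abs_le.2 ⟨neg_le.1 (by simpa using hmax (-x) (hsymm x hx)), hmax x hx⟩

section ConvexBody

variable {E : Type*} [NormedAddCommGroup E] [InnerProductSpace ℝ E] [FiniteDimensional ℝ E]
  [MeasurableSpace E] [BorelSpace E] (μ : Measure E) [μ.IsAddHaarMeasure]
  {K : Set E} {θ x₀ : E} {t h : ℝ}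

theorem MeasureTheory.Measure.addHaar_setOf_inner_eq_zero (hθ : θ ≠ 0) :
    μ {x | ⟪x, θ⟫ = 0} = 0 := by
  have hker : {x | ⟪x, θ⟫ = 0} = (LinearMap.ker (innerₛₗ ℝ θ) : Set E) := by
    ext x
    simp [real_inner_comm]
  rw [hker]
  refine Measure.addHaar_submodule μ _ fun htop ↦ hθ ?_
  have hθθ : θ ∈ LinearMap.ker (innerₛₗ ℝ θ) := htop ▸ Submodule.mem_top
  simpa using hθθ

theorem exists_mem_inner_pos (hsymm : ∀ x ∈ K, -x ∈ K) (hK : μ K ≠ 0) (hθ : θ ≠ 0) :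
    ∃ x ∈ K, 0 < ⟪x, θ⟫ := by
  by_contra! hnonpos
  refine hK (measure_mono_null (fun x hx ↦ ?_) (Measure.addHaar_setOf_inner_eq_zero μ hθ))
  have hneg := hnonpos (-x) (hsymm x hx)
  rw [inner_neg_left] at hneg
  exact le_antisymm (hnonpos x hx) (neg_nonpos.1 hneg)

theorem ofReal_mul_measure_le_measure_setOf_le_inner (hconv : Convex ℝ K) (hx₀ : x₀ ∈ K)
    (ht : 0 < t) (hth : t ≤ ⟪x₀, θ⟫) :
    ENNReal.ofReal ((1 - t / ⟪x₀, θ⟫) ^ Module.finrank ℝ E) * μ (K ∩ {x | 0 ≤ ⟪x, θ⟫}) ≤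
      μ ({x | t ≤ ⟪x, θ⟫} ∩ K) := by
  set h := ⟪x₀, θ⟫
  have hh : 0 < h := ht.trans_le hth
  have hc : 0 ≤ 1 - t / h := sub_nonneg.2 ((div_le_one hh).2 hth)
  have hsub : (fun y ↦ (t / h) • x₀ + y) '' ((1 - t / h) • (K ∩ {x | 0 ≤ ⟪x, θ⟫})) ⊆
      {x | t ≤ ⟪x, θ⟫} ∩ K := by
    rintro _ ⟨_, ⟨y, ⟨hyK, hy⟩, rfl⟩, rfl⟩
    refine ⟨?_, hconv hx₀ hyK (div_nonneg ht.le hh.le) hc (by ring)⟩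
    have hy' : 0 ≤ ⟪y, θ⟫ := hy
    show t ≤ ⟪(t / h) • x₀ + (1 - t / h) • y, θ⟫
    rw [inner_add_left, real_inner_smul_left, real_inner_smul_left, div_mul_cancel₀ t hh.ne']
    exact le_add_of_nonneg_right (mul_nonneg hc hy')
  calc ENNReal.ofReal ((1 - t / h) ^ Module.finrank ℝ E) * μ (K ∩ {x | 0 ≤ ⟪x, θ⟫})
      = μ ((fun y ↦ (t / h) • x₀ + y) '' ((1 - t / h) • (K ∩ {x | 0 ≤ ⟪x, θ⟫}))) := by
        rw [image_add_left, measure_preimage_add, Measure.addHaar_smul_of_nonneg μ hc]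
    _ ≤ μ ({x | t ≤ ⟪x, θ⟫} ∩ K) := measure_mono hsub

theorem ofReal_mul_measure_le_measure_setOf_le_abs_inner (hconv : Convex ℝ K)
    (hK : MeasurableSet K) (hx₀ : x₀ ∈ K) (hx₀' : -x₀ ∈ K) (ht : 0 < t) (hth : t ≤ ⟪x₀, θ⟫) :
    ENNReal.ofReal ((1 - t / ⟪x₀, θ⟫) ^ Module.finrank ℝ E) * μ K ≤
      μ ({x | t ≤ |⟪x, θ⟫|} ∩ K) := by
  set c := ENNReal.ofReal ((1 - t / ⟪x₀, θ⟫) ^ Module.finrank ℝ E)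
  have hneg := ofReal_mul_measure_le_measure_setOf_le_inner μ (θ := -θ) hconv hx₀' ht
    (by rwa [inner_neg_neg])
  rw [inner_neg_neg] at hneg
  have hcover : K ⊆ K ∩ {x | 0 ≤ ⟪x, θ⟫} ∪ K ∩ {x | 0 ≤ ⟪x, -θ⟫} := fun x hx ↦ by
    rcases le_total 0 ⟪x, θ⟫ with hx' | hx'
    · exact Or.inl ⟨hx, hx'⟩
    · refine Or.inr ⟨hx, ?_⟩
      show 0 ≤ ⟪x, -θ⟫
      rwa [inner_neg_right, neg_nonneg]
  have hdisj : Disjoint ({x | t ≤ ⟪x, θ⟫} ∩ K) ({x | t ≤ ⟪x, -θ⟫} ∩ K) := by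
    refine Set.disjoint_left.2 fun x hx hx' ↦ ?_
    have hpos : t ≤ ⟪x, θ⟫ := hx.1
    have hneg : t ≤ ⟪x, -θ⟫ := hx'.1
    rw [inner_neg_right] at hneg
    linarith
  have hmeas : MeasurableSet ({x | t ≤ ⟪x, -θ⟫} ∩ K) :=
    (measurableSet_le measurable_const (by fun_prop)).inter hK
  calc c * μ K
      ≤ c * μ (K ∩ {x | 0 ≤ ⟪x, θ⟫}) + c * μ (K ∩ {x | 0 ≤ ⟪x, -θ⟫}) := by
        rw [← mul_add]
        gcongr
        exact (measure_mono hcover).trans (measure_union_le _ _)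
    _ ≤ μ ({x | t ≤ ⟪x, θ⟫} ∩ K) + μ ({x | t ≤ ⟪x, -θ⟫} ∩ K) :=
        add_le_add (ofReal_mul_measure_le_measure_setOf_le_inner μ hconv hx₀ ht hth) hneg
    _ = μ ({x | t ≤ ⟪x, θ⟫} ∩ K ∪ {x | t ≤ ⟪x, -θ⟫} ∩ K) := (measure_union hdisj hmeas).symm
    _ ≤ μ ({x | t ≤ |⟪x, θ⟫|} ∩ K) := by
        refine measure_mono (union_subset ?_ ?_) <;> rintro x ⟨hx, hxK⟩ <;> refine ⟨?_, hxK⟩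
        · exact (show t ≤ ⟪x, θ⟫ from hx).trans (le_abs_self _)
        · have hx : t ≤ ⟪x, -θ⟫ := hx
          rw [inner_neg_right] at hx
          exact hx.trans (neg_le_abs _)

theorem measure_setOf_lt_abs_inner_le (hconv : Convex ℝ K) (hK : MeasurableSet K)
    (hKfin : μ K ≠ ∞) (h0K : 0 ∈ K) (habs : ∀ x ∈ K, |⟪x, θ⟫| ≤ h) (ht : 0 < t) (hth : t ≤ h) :
    μ ({x | t < |⟪x, θ⟫|} ∩ K) ≤ ENNReal.ofReal (1 - (t / h) ^ Module.finrank ℝ E) * μ K := by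
  have hh : 0 < h := ht.trans_le hth
  set s := t / h
  have hs0 : 0 ≤ s := div_nonneg ht.le hh.le
  have hsK : s • K ⊆ K := by
    rintro _ ⟨y, hy, rfl⟩
    exact (hconv.starConvex h0K).smul_mem hy hs0 ((div_le_one hh).2 hth)
  have hsub : {x | t < |⟪x, θ⟫|} ∩ K ⊆ K \ s • K := by
    rintro x ⟨hx, hxK⟩
    refine ⟨hxK, ?_⟩
    rintro ⟨y, hy, rfl⟩
    have hx : t < |⟪s • y, θ⟫| := hx
    rw [real_inner_smul_left, abs_mul, abs_of_nonneg hs0] at hx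
    have hle : s * |⟪y, θ⟫| ≤ t := by
      calc s * |⟪y, θ⟫| ≤ s * h := by gcongr; exact habs y hy
        _ = t := div_mul_cancel₀ t hh.ne'
    exact hle.not_gt hx
  have hvol : μ (s • K) = ENNReal.ofReal (s ^ Module.finrank ℝ E) * μ K :=
    Measure.addHaar_smul_of_nonneg μ hs0 K
  calc μ ({x | t < |⟪x, θ⟫|} ∩ K) ≤ μ (K \ s • K) := measure_mono hsub
    _ = μ K - ENNReal.ofReal (s ^ Module.finrank ℝ E) * μ K := by
        rw [measure_sdiff hsK (hK.const_smul₀ s).nullMeasurableSet, hvol]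
        exact ne_top_of_le_ne_top hKfin (measure_mono hsK)
    _ = ENNReal.ofReal (1 - s ^ Module.finrank ℝ E) * μ K := by
        rw [ENNReal.ofReal_sub _ (pow_nonneg hs0 _), ENNReal.ofReal_one,
          ENNReal.sub_mul fun _ _ ↦ hKfin, one_mul]

variable {p : ℝ}

theorem mul_beta_le_integral_abs_inner_rpow (hconv : Convex ℝ K) (hcomp : IsCompact K)
    (hx₀ : x₀ ∈ K) (hx₀' : -x₀ ∈ K) (hh : 0 < ⟪x₀, θ⟫) (hvol : μ K = 1) (hp : 0 < p) :
    ⟪x₀, θ⟫ ^ p * (Module.finrank ℝ E * beta (p + 1) (Module.finrank ℝ E)) ≤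
      ∫ x in K, |⟪x, θ⟫| ^ p ∂μ := by
  set h := ⟪x₀, θ⟫
  set d := Module.finrank ℝ E
  have hd : (0 : ℝ) < d := by
    have hx₀0 : x₀ ≠ 0 := by rintro rfl; simp [h] at hh
    exact_mod_cast Module.finrank_pos_iff_exists_ne_zero.2 ⟨x₀, hx₀0⟩
  have hK := hcomp.measurableSet
  have hbeta : ∫ u in (0 : ℝ)..1, u ^ (p - 1) * (1 - u) ^ d = beta p (d + 1) := by
    rw [← intervalIntegral_rpow_mul_one_sub_rpow_eq_beta hp (by positivity)]
    simp_rw [add_sub_cancel_right, Real.rpow_natCast]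
  calc h ^ p * (d * beta (p + 1) d) = p * ∫ t in (0 : ℝ)..h, t ^ (p - 1) * (1 - t / h) ^ d := by
        rw [intervalIntegral_rpow_mul_comp_div hh (fun u ↦ (1 - u) ^ d), hbeta,
          ← mul_beta_add_one_right hp hd]
        ring
    _ ≤ ∫ x in K, |⟪x, θ⟫| ^ p ∂μ := by
        refine mul_intervalIntegral_le_integral_rpow (ae_of_all _ fun _ ↦ abs_nonneg _)
          (by fun_prop) ?_ hp hh.le ?_ ?_ fun t ht ↦ ?_
        · exact ((continuous_id.inner continuous_const).abs.rpow_const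
            fun _ ↦ Or.inr hp.le).continuousOn.integrableOn_compact hcomp
        · exact (intervalIntegral.intervalIntegrable_rpow' (by linarith)).mul_continuousOn
            (by fun_prop)
        · intro t ht
          exact pow_nonneg (sub_nonneg.2 ((div_le_one hh).2 ht.2.le)) d
        · rw [Measure.restrict_apply' hK]
          simpa [hvol] using
            ofReal_mul_measure_le_measure_setOf_le_abs_inner μ hconv hK hx₀ hx₀' ht.1 ht.2.le

theorem integral_abs_inner_rpow_le (hconv : Convex ℝ K) (hK : MeasurableSet K) (hvol : μ K = 1)
    (h0K : 0 ∈ K) (habs : ∀ x ∈ K, |⟪x, θ⟫| ≤ h) (hh : 0 < h) (hp : 0 < p) :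
    ∫ x in K, |⟪x, θ⟫| ^ p ∂μ ≤ h ^ p * (Module.finrank ℝ E / (p + Module.finrank ℝ E)) := by
  set d := Module.finrank ℝ E
  calc ∫ x in K, |⟪x, θ⟫| ^ p ∂μ ≤ p * ∫ t in (0 : ℝ)..h, t ^ (p - 1) * (1 - (t / h) ^ d) := by
        refine integral_rpow_le_mul_intervalIntegral (ae_of_all _ fun _ ↦ abs_nonneg _)
          (by fun_prop) (ae_restrict_of_forall_mem hK habs) hp hh.le ?_ ?_ fun t ht ↦ ?_
        · exact (intervalIntegral.intervalIntegrable_rpow' (by linarith)).mul_continuousOn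
            (by fun_prop)
        · intro t ht
          exact sub_nonneg.2 (pow_le_one₀ (div_nonneg ht.1.le hh.le) ((div_le_one hh).2 ht.2.le))
        · rw [Measure.restrict_apply' hK]
          simpa [hvol] using measure_setOf_lt_abs_inner_le μ hconv hK (by simp [hvol]) h0K habs
            ht.1 ht.2.le
    _ = h ^ p * (d / (p + d)) := by
        rw [intervalIntegral_rpow_mul_comp_div hh (fun u ↦ 1 - u ^ d), mul_left_comm,
          mul_intervalIntegral_rpow_mul_one_sub_pow hp]

end ConvexBody

theorem rpow_one_div_div_eq {I h p : ℝ} (hI : 0 ≤ I) (hh : 0 < h) (hp : p ≠ 0) :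
    I ^ (1 / p) / h = (I / h ^ p) ^ (1 / p) := by
  rw [Real.div_rpow hI (Real.rpow_nonneg hh.le p), one_div, Real.rpow_rpow_inv hh.le hp]

theorem IsCompact.exists_suppFn_eq {n : ℕ} {K : Set (Euc n)} (hK : IsCompact K)
    (hne : K.Nonempty) (θ : Euc n) :
    ∃ x₀ ∈ K, (∀ x ∈ K, ⟪x, θ⟫ ≤ ⟪x₀, θ⟫) ∧ suppFn K θ = ⟪x₀, θ⟫ := by
  have hcont : Continuous fun x : Euc n ↦ ⟪x, θ⟫ := by fun_prop
  obtain ⟨x₀, hx₀, hmax⟩ := hK.exists_isMaxOn hne hcont.continuousOn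
  exact ⟨x₀, hx₀, hmax, IsGreatest.csSup_eq ⟨mem_image_of_mem _ hx₀, forall_mem_image.2 hmax⟩⟩

/-- For a symmetric convex body `K` of volume 1, `1 ≤ p < ∞` and `θ ∈ S^{n-1}`:
`B(p+1,n)^{1/p} ≤ h_{Z_p(K)}(θ)/h_K(θ) ≤ (n/(p+1))^{1/p}`. -/
theorem stmt2 {n : ℕ} (K : Set (Euc n))
    (hconv : Convex ℝ K) (hcomp : IsCompact K)
    (hsymm : ∀ x ∈ K, -x ∈ K) (hvol : volume K = 1)
    (p : ℝ) (hp : 1 ≤ p) (θ : Euc n) (hθ : ‖θ‖ = 1) :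
    (Real.Gamma (p + 1) * Real.Gamma n / Real.Gamma (p + 1 + n)) ^ (1 / p) ≤
        (∫ x in K, |⟪x, θ⟫| ^ p) ^ (1 / p) / suppFn K θ ∧
      (∫ x in K, |⟪x, θ⟫| ^ p) ^ (1 / p) / suppFn K θ ≤ ((n : ℝ) / (p + 1)) ^ (1 / p) := by
  have hp0 : 0 < p := by linarith
  have hθ0 : θ ≠ 0 := by rintro rfl; simp at hθ
  have hn : (1 : ℝ) ≤ n := by
    have hpos := Module.finrank_pos_iff_exists_ne_zero (R := ℝ) |>.2 ⟨θ, hθ0⟩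
    rw [finrank_euclideanSpace_fin] at hpos
    exact_mod_cast hpos
  have hvol0 : volume K ≠ 0 := by simp [hvol]
  have hne := nonempty_of_measure_ne_zero hvol0
  obtain ⟨x₀, hx₀, hmax, hsupp⟩ := hcomp.exists_suppFn_eq hne θ
  obtain ⟨x, hx, hxθ⟩ := exists_mem_inner_pos volume hsymm hvol0 hθ0
  have hh : 0 < ⟪x₀, θ⟫ := hxθ.trans_le (hmax x hx)
  have hlow := mul_beta_le_integral_abs_inner_rpow volume hconv hcomp hx₀ (hsymm x₀ hx₀) hh hvol hp0
  have hup := integral_abs_inner_rpow_le volume hconv hcomp.measurableSet hvol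
    ((ConvexBody.mk K hconv hcomp hne).zero_mem_of_symmetric hsymm)
    (abs_inner_le_of_forall_inner_le hsymm hmax) hh hp0
  rw [finrank_euclideanSpace_fin] at hlow hup
  have hB : 0 < beta (p + 1) n := beta_pos (by linarith) (by linarith)
  have hhp := Real.rpow_pos_of_pos hh p
  show beta (p + 1) n ^ (1 / p) ≤ _ ∧ _
  rw [hsupp, rpow_one_div_div_eq (integral_nonneg fun _ ↦ by positivity) hh hp0.ne']
  constructor <;> refine Real.rpow_le_rpow (by positivity) ?_ (by positivity)
  · rw [le_div_iff₀' hhp]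
    exact (mul_le_mul_of_nonneg_left (le_mul_of_one_le_left hB.le hn) hhp.le).trans hlow
  · rw [div_le_iff₀' hhp]
    exact hup.trans (by gcongr)
end
end

section
/- Let K be a symmetric convex body in ℝ^n of volume 1. Then n·|K°| ≤ liminf_{p→∞} (p/log p)·(|Z_p(K)°| − |K°|) and limsup_{p→∞} (p/log p)·(|Z_p(K)°| − |K°|) ≤ n²·|K°|. -/
/-!
Write `h_K` for the support function of `K`. For large `p` we compare `Z_p(K)` with dilates of
`K`, `α_p K ⊆ Z_p(K) ⊆ β_p K`; polarity reverses the inclusions and scales volumes by `c^{-n}`,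
so `β_p^{-n} |K°| ≤ |Z_p(K)°| ≤ α_p^{-n} |K°|`.

* Shrinking `K` by the factor `s = 1/p` towards a point `x₀` where `⟨·, θ⟩` is maximal gives a
  subset of volume `s^n` on which `⟨x, θ⟩ ≥ (1 - 2s) h_K(θ)`; hence `h_{Z_p(K)} ≥ α_p h_K` with
  `α_p = ((1 - 2/p)^p p^{-n})^{1/p}`.
* If `K ⊆ B(0, R)`, the points of `K` with `|⟨x, θ⟩| > (1 - t) h_K(θ)` lie in two slabs of width
  at most `tR` inside the ball, a set of volume at most `(2R)^n t`; hence `h_{Z_p(K)} ≤ β_p h_K`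
  with `β_p = ((1 - t)^p + (2R)^n t)^{1/p}`. The choice `t = log p / p` makes `(1 - t)^p ≤ t`.

Then `log α_p ∼ -n log p / p` and `log β_p ∼ -log p / p`, i.e. `α_p^{-n} - 1 ∼ n² log p / p` and
`β_p^{-n} - 1 ∼ n log p / p`.
-/

open MeasureTheory Filter Set Metric
open scoped RealInnerProductSpace Topology ENNReal NNReal

noncomputable section

/-- The `L_p`-centroid body `Z_p(K)`: the convex body whose support function is
`θ ↦ (∫_K |⟨x,θ⟫|^p dx)^{1/p}`, realized as the corresponding intersection of half-spaces. -/
noncomputable def ZpBody {n : ℕ} (K : Set (Euc n)) (p : ℝ) : Set (Euc n) :=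
  {y | ∀ v : Euc n, ⟪y, v⟫ ≤ (∫ x in K, |⟪x, v⟫| ^ p) ^ (1 / p)}

/-- The polar body `C° = {y : ⟨x,y⟩ ≤ 1 for all x ∈ C}`. -/
def polarSet {n : ℕ} (C : Set (Euc n)) : Set (Euc n) :=
  {y | ∀ x ∈ C, ⟪x, y⟫ ≤ 1}

open Real
open scoped Pointwise

theorem tendsto_exp_sub_one_mul {ι : Type*} {l : Filter ι} {x g : ι → ℝ} {L : ℝ}
    (hx : Tendsto x l (𝓝 0)) (hxg : Tendsto (fun i => x i * g i) l (𝓝 L)) :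
    Tendsto (fun i => (exp (x i) - 1) * g i) l (𝓝 L) := by
  have hquad : Tendsto (fun i => (exp (x i) - 1 - x i) * g i) l (𝓝 0) := by
    refine squeeze_zero_norm' (a := fun i => |x i| * |x i * g i|) ?_
      (by simpa using hx.abs.mul hxg.abs)
    filter_upwards [hx.eventually (closedBall_mem_nhds 0 one_pos)] with i hi
    rw [dist_zero_right, Real.norm_eq_abs] at hi
    calc ‖(exp (x i) - 1 - x i) * g i‖ ≤ x i ^ 2 * |g i| := by
          rw [norm_mul, Real.norm_eq_abs, Real.norm_eq_abs]
          gcongr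
          exact abs_exp_sub_one_sub_id_le hi
      _ = |x i| * |x i * g i| := by rw [abs_mul, ← sq_abs (x i), sq, mul_assoc]
  simpa [sub_mul] using hquad.add hxg

theorem tendsto_mul_inv_pow_sub_one {ι : Type*} {l : Filter ι} {c g : ι → ℝ} {L : ℝ} (n : ℕ)
    (hc : ∀ᶠ i in l, 0 < c i) (hlog : Tendsto (fun i => log (c i)) l (𝓝 0))
    (hg : Tendsto (fun i => g i * log (c i)) l (𝓝 (-L))) :
    Tendsto (fun i => g i * ((c i)⁻¹ ^ n - 1)) l (𝓝 (n * L)) := by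
  have hx : Tendsto (fun i => -(n * log (c i))) l (𝓝 0) := by
    simpa using (hlog.const_mul (n : ℝ)).neg
  have hxg : Tendsto (fun i => -(n * log (c i)) * g i) l (𝓝 (n * L)) := by
    have := hg.const_mul (-(n : ℝ))
    rw [neg_mul_neg] at this
    exact this.congr fun i => by ring
  refine (tendsto_exp_sub_one_mul hx hxg).congr' ?_
  filter_upwards [hc] with i hci
  rw [exp_neg, exp_nat_mul, exp_log hci, inv_pow, mul_comm]

theorem tendsto_log_div_self_atTop : Tendsto (fun p : ℝ => log p / p) atTop (𝓝 0) := by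
  simpa using isLittleO_log_id_atTop.tendsto_div_nhds_zero

theorem tendsto_div_log_mul_inv_pow_sub_one {c : ℝ → ℝ} {L : ℝ} (n : ℕ)
    (hc : ∀ᶠ p in atTop, 0 < c p) (h : Tendsto (fun p => p / log p * log (c p)) atTop (𝓝 (-L))) :
    Tendsto (fun p => p / log p * ((c p)⁻¹ ^ n - 1)) atTop (𝓝 (n * L)) := by
  refine tendsto_mul_inv_pow_sub_one n hc ?_ h
  have hprod : Tendsto (fun p => p / log p * log (c p) * (log p / p)) atTop (𝓝 0) := by
    simpa using h.mul tendsto_log_div_self_atTop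
  refine hprod.congr' ?_
  filter_upwards [eventually_gt_atTop 1] with p hp
  have : log p ≠ 0 := (log_pos hp).ne'
  field_simp

theorem le_liminf_and_limsup_le_of_squeeze {ι : Type*} {l : Filter ι} [l.NeBot] {f g h : ι → ℝ}
    {a b : ℝ} (hf : Tendsto f l (𝓝 a)) (hh : Tendsto h l (𝓝 b)) (hfg : f ≤ᶠ[l] g)
    (hgh : g ≤ᶠ[l] h) : a ≤ liminf g l ∧ limsup g l ≤ b := by
  constructor
  · rw [← hf.liminf_eq]
    exact liminf_le_liminf hfg hf.isBoundedUnder_ge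
      (hh.isBoundedUnder_le.mono_le hgh).isCoboundedUnder_ge
  · rw [← hh.limsup_eq]
    exact limsup_le_limsup hgh (hf.isBoundedUnder_ge.mono_ge hfg).isCoboundedUnder_le
      hh.isBoundedUnder_le

theorem setIntegral_le_mul_measureReal {X : Type*} [MeasurableSpace X] {μ : Measure X}
    {s : Set X} {f : X → ℝ} {c : ℝ} (hs : MeasurableSet s) (hμs : μ s ≠ ∞)
    (hf : IntegrableOn f s μ) (hfc : ∀ x ∈ s, f x ≤ c) : ∫ x in s, f x ∂μ ≤ c * μ.real s := by
  rw [mul_comm, ← smul_eq_mul, ← setIntegral_const]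
  exact setIntegral_mono_on hf (integrableOn_const hμs) hs hfc

theorem rpow_mul_rpow_one_div {a X p : ℝ} (ha : 0 ≤ a) (hX : 0 ≤ X) (hp : p ≠ 0) :
    (a ^ p * X) ^ (1 / p) = a * X ^ (1 / p) := by
  rw [mul_rpow (rpow_nonneg ha p) hX, one_div, rpow_rpow_inv ha hp]

-- The factors `α_p` and `β_p` (with `t = log p / p`) of the comparison `α_p K ⊆ Z_p(K) ⊆ β_p K`.
def zpLowerScale (n : ℕ) (p : ℝ) : ℝ := ((1 - 2 / p) ^ p * (1 / p) ^ n) ^ (1 / p)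

def zpUpperScale (n : ℕ) (R p : ℝ) : ℝ :=
  ((1 - log p / p) ^ p + (2 * R) ^ n * (log p / p)) ^ (1 / p)

theorem zpLowerScale_pos (n : ℕ) {p : ℝ} (hp : 2 < p) : 0 < zpLowerScale n p := by
  have : 0 < 1 - 2 / p := by rw [sub_pos, div_lt_one (by linarith)]; exact hp
  unfold zpLowerScale
  positivity

theorem tendsto_zpLowerScale (n : ℕ) :
    Tendsto (fun p => p / log p * ((zpLowerScale n p)⁻¹ ^ n - 1)) atTop (𝓝 ((n : ℝ) ^ 2)) := by
  rw [sq]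
  refine tendsto_div_log_mul_inv_pow_sub_one n
    ((eventually_gt_atTop 2).mono fun p hp => zpLowerScale_pos n hp) ?_
  have hmul : Tendsto (fun p : ℝ => p * log (1 + (-2) / p)) atTop (𝓝 (-2)) :=
    tendsto_mul_log_one_add_of_tendsto <| tendsto_const_nhds.congr' <|
      (eventually_ne_atTop 0).mono fun p hp => by field_simp
  have hlim : Tendsto (fun p : ℝ => p * log (1 + (-2) / p) / log p - n) atTop (𝓝 (0 - n)) :=
    (hmul.div_atTop tendsto_log_atTop).sub_const _
  rw [zero_sub] at hlim
  refine hlim.congr' ?_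
  filter_upwards [eventually_gt_atTop 2] with p hp
  have h12 : 0 < 1 - 2 / p := by rw [sub_pos, div_lt_one (by linarith)]; exact hp
  have hlogp : log p ≠ 0 := (log_pos (by linarith)).ne'
  rw [zpLowerScale, log_rpow (by positivity), log_mul (by positivity) (by positivity),
    log_rpow h12, log_pow, one_div, log_inv, neg_div, ← sub_eq_add_neg]
  field_simp
  ring

theorem log_div_self_mem_Ioc {p : ℝ} (hp : 1 < p) : log p / p ∈ Ioc 0 1 :=
  ⟨div_pos (log_pos hp) (by linarith),
    (div_le_one (by linarith)).2 ((log_le_sub_one_of_pos (by linarith)).trans (by linarith))⟩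

theorem one_sub_log_div_self_rpow_add_pos {A p : ℝ} (hA : 0 < A) (hp : 1 < p) :
    0 < (1 - log p / p) ^ p + A * (log p / p) := by
  obtain ⟨ht0, ht1⟩ := log_div_self_mem_Ioc hp
  have : 0 ≤ (1 - log p / p) ^ p := rpow_nonneg (by linarith) _
  positivity

theorem zpUpperScale_pos (n : ℕ) {R p : ℝ} (hR : 0 < R) (hp : 1 < p) : 0 < zpUpperScale n R p :=
  rpow_pos_of_pos (one_sub_log_div_self_rpow_add_pos (by positivity) hp) _

theorem one_sub_log_div_self_rpow_le {p : ℝ} (hp : exp 1 ≤ p) :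
    (1 - log p / p) ^ p ≤ log p / p := by
  have hp1 : 1 < p := (one_lt_exp_iff.2 one_pos).trans_le hp
  have hp0 : 0 < p := by linarith
  have hlog : 1 ≤ log p := (le_log_iff_exp_le hp0).2 hp
  calc (1 - log p / p) ^ p ≤ exp (-(log p / p)) ^ p :=
        rpow_le_rpow (by linarith [(log_div_self_mem_Ioc hp1).2])
          (one_sub_le_exp_neg _) hp0.le
    _ = p⁻¹ := by rw [← exp_mul, neg_mul, div_mul_cancel₀ _ hp0.ne', exp_neg, exp_log hp0]
    _ ≤ log p / p := by rw [inv_eq_one_div]; gcongr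

theorem tendsto_log_one_sub_rpow_add_div_log {A : ℝ} (hA : 0 < A) :
    Tendsto (fun p => log ((1 - log p / p) ^ p + A * (log p / p)) / log p) atTop (𝓝 (-1)) := by
  have hlim : ∀ c > 0, Tendsto (fun p => log (c * (log p / p)) / log p) atTop (𝓝 (-1)) := by
    intro c hc
    have hsum : Tendsto (fun p => log c / log p + log (log p) / log p - 1) atTop
        (𝓝 (0 + 0 - 1)) :=
      ((tendsto_const_nhds.div_atTop tendsto_log_atTop).add
        (tendsto_log_div_self_atTop.comp tendsto_log_atTop)).sub_const 1
    rw [zero_add, zero_sub] at hsum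
    refine hsum.congr' ?_
    filter_upwards [eventually_gt_atTop 1] with p hp
    have hlogp : 0 < log p := log_pos hp
    rw [log_mul hc.ne' (by positivity), log_div hlogp.ne' (by positivity)]
    field_simp
    ring
  -- `A t ≤ (1 - t) ^ p + A t ≤ (A + 1) t` for `t = log p / p`
  have hsandwich : ∀ᶠ p in atTop,
      log (A * (log p / p)) / log p ≤ log ((1 - log p / p) ^ p + A * (log p / p)) / log p ∧
      log ((1 - log p / p) ^ p + A * (log p / p)) / log p ≤
        log ((A + 1) * (log p / p)) / log p := by
    filter_upwards [eventually_ge_atTop (exp 1)] with p hp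
    have hp1 : 1 < p := (one_lt_exp_iff.2 one_pos).trans_le hp
    have hlogp : 0 < log p := log_pos hp1
    have hrpow : 0 ≤ (1 - log p / p) ^ p :=
      rpow_nonneg (sub_nonneg.2 (log_div_self_mem_Ioc hp1).2) _
    constructor <;> gcongr
    · linarith
    · linarith [one_sub_log_div_self_rpow_le hp]
  exact tendsto_of_tendsto_of_tendsto_of_le_of_le' (hlim A hA) (hlim (A + 1) (by linarith))
    (hsandwich.mono fun _ h => h.1) (hsandwich.mono fun _ h => h.2)

theorem tendsto_zpUpperScale (n : ℕ) {R : ℝ} (hR : 0 < R) :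
    Tendsto (fun p => p / log p * ((zpUpperScale n R p)⁻¹ ^ n - 1)) atTop (𝓝 (n : ℝ)) := by
  have hA : 0 < (2 * R) ^ n := by positivity
  rw [← mul_one (n : ℝ)]
  refine tendsto_div_log_mul_inv_pow_sub_one n
    ((eventually_gt_atTop 1).mono fun p hp => zpUpperScale_pos n hR hp) ?_
  refine (tendsto_log_one_sub_rpow_add_div_log hA).congr' ?_
  filter_upwards [eventually_gt_atTop 1] with p hp
  have hlogp : log p ≠ 0 := (log_pos hp).ne'
  rw [zpUpperScale, log_rpow (one_sub_log_div_self_rpow_add_pos hA hp)]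
  field_simp

section Polar

variable {n : ℕ}

theorem polarSet_anti {C D : Set (Euc n)} (h : C ⊆ D) : polarSet D ⊆ polarSet C :=
  fun _ hy x hx => hy x (h hx)

theorem polarSet_smul (C : Set (Euc n)) {c : ℝ} (hc : 0 < c) :
    polarSet (c • C) = c⁻¹ • polarSet C := by
  ext y
  rw [mem_smul_set_iff_inv_smul_mem₀ (inv_ne_zero hc.ne'), inv_inv]
  simp only [polarSet, ← image_smul, forall_mem_image, mem_ofPred_eq, real_inner_smul_left,
    real_inner_smul_right]

theorem polarSet_subset_closedBall {C : Set (Euc n)} {r : ℝ} (hr : 0 < r)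
    (h : closedBall 0 r ⊆ C) : polarSet C ⊆ closedBall 0 r⁻¹ := by
  intro y hy
  rw [mem_closedBall, dist_zero_right]
  rcases eq_or_ne y 0 with rfl | hy0
  · simpa using hr.le
  have hyn : 0 < ‖y‖ := norm_pos_iff.2 hy0
  have hmem : (r / ‖y‖) • y ∈ C := h <| by
    rw [mem_closedBall, dist_zero_right, norm_smul, Real.norm_eq_abs, abs_of_pos (by positivity),
      div_mul_cancel₀ _ hyn.ne']
  have := hy _ hmem
  rw [real_inner_smul_left, real_inner_self_eq_norm_sq] at this
  field_simp at this
  rwa [← one_div, le_div_iff₀' hr]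

theorem volume_polarSet_smul (C : Set (Euc n)) {c : ℝ} (hc : 0 < c) :
    volume (polarSet (c • C)) = ENNReal.ofReal (c⁻¹ ^ n) * volume (polarSet C) := by
  rw [polarSet_smul C hc, Measure.addHaar_smul, finrank_euclideanSpace_fin,
    abs_of_nonneg (by positivity)]

theorem toReal_volume_polarSet_mem_Icc {C Z : Set (Euc n)} {α β : ℝ} (hα : 0 < α) (hβ : 0 < β)
    (hC : volume (polarSet C) ≠ ∞) (hαZ : α • C ⊆ Z) (hZβ : Z ⊆ β • C) :
    β⁻¹ ^ n * (volume (polarSet C)).toReal ≤ (volume (polarSet Z)).toReal ∧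
      (volume (polarSet Z)).toReal ≤ α⁻¹ ^ n * (volume (polarSet C)).toReal := by
  have hupper := measure_mono (μ := volume) (polarSet_anti hαZ)
  have hlower := measure_mono (μ := volume) (polarSet_anti hZβ)
  rw [volume_polarSet_smul C hα] at hupper
  rw [volume_polarSet_smul C hβ] at hlower
  have hfin : ENNReal.ofReal (α⁻¹ ^ n) * volume (polarSet C) ≠ ∞ :=
    ENNReal.mul_ne_top ENNReal.ofReal_ne_top hC
  constructor
  · simpa [ENNReal.toReal_mul, hβ.le] using
      ENNReal.toReal_mono (ne_top_of_le_ne_top hfin hupper) hlower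
  · simpa [ENNReal.toReal_mul, hα.le] using ENNReal.toReal_mono hfin hupper

end Polar

section SupportFunction

variable {n : ℕ} {K : Set (Euc n)}

theorem inner_le_suppFn (hK : IsCompact K) (θ : Euc n) {x : Euc n} (hx : x ∈ K) :
    ⟪x, θ⟫ ≤ suppFn K θ :=
  le_csSup (hK.image (continuous_id.inner continuous_const)).bddAbove ⟨x, hx, rfl⟩

theorem abs_inner_le_suppFn (hK : IsCompact K) (hsymm : ∀ x ∈ K, -x ∈ K) (θ : Euc n)
    {x : Euc n} (hx : x ∈ K) : |⟪x, θ⟫| ≤ suppFn K θ := by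
  have := inner_le_suppFn hK θ (hsymm x hx)
  rw [inner_neg_left] at this
  exact abs_le.2 ⟨by linarith, inner_le_suppFn hK θ hx⟩

theorem suppFn_le {θ : Euc n} {c : ℝ} (hne : K.Nonempty) (h : ∀ x ∈ K, ⟪x, θ⟫ ≤ c) :
    suppFn K θ ≤ c :=
  csSup_le (hne.image _) (forall_mem_image.2 h)

theorem exists_inner_eq_suppFn (hK : IsCompact K) (hne : K.Nonempty) (θ : Euc n) :
    ∃ x₀ ∈ K, ⟪x₀, θ⟫ = suppFn K θ := by
  obtain ⟨x₀, hx₀, hmax⟩ := hK.exists_isMaxOn hne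
    (continuous_id.inner continuous_const : Continuous fun x : Euc n => ⟪x, θ⟫).continuousOn
  exact ⟨x₀, hx₀, le_antisymm (inner_le_suppFn hK θ hx₀) (suppFn_le hne fun x hx => hmax hx)⟩

theorem suppFn_le_mul_norm (hne : K.Nonempty) {R : ℝ} (hKR : K ⊆ closedBall 0 R) (θ : Euc n) :
    suppFn K θ ≤ R * ‖θ‖ :=
  suppFn_le hne fun x hx => (real_inner_le_norm x θ).trans <| by
    gcongr
    simpa using hKR hx

theorem mem_of_inner_le_suppFn (hconv : Convex ℝ K) (hK : IsCompact K) (hne : K.Nonempty)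
    {y : Euc n} (h : ∀ v, ⟪y, v⟫ ≤ suppFn K v) : y ∈ K := by
  by_contra hy
  obtain ⟨f, u, hfu, hfy⟩ := geometric_hahn_banach_closed_point hconv hK.isClosed hy
  set v := (InnerProductSpace.toDual ℝ (Euc n)).symm f
  have hv : ∀ z, ⟪z, v⟫ = f z := fun z => by
    rw [real_inner_comm]
    exact InnerProductSpace.toDual_symm_apply
  have := (h v).trans (suppFn_le hne fun x hx => (hv x).trans_le (hfu x hx).le)
  rw [hv] at this
  linarith

theorem mem_smul_of_inner_le_mul_suppFn (hconv : Convex ℝ K) (hK : IsCompact K)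
    (hne : K.Nonempty) {β : ℝ} (hβ : 0 < β) {y : Euc n} (h : ∀ v, ⟪y, v⟫ ≤ β * suppFn K v) :
    y ∈ β • K := by
  rw [mem_smul_set_iff_inv_smul_mem₀ hβ.ne']
  refine mem_of_inner_le_suppFn hconv hK hne fun v => ?_
  rw [real_inner_smul_left, inv_mul_le_iff₀ hβ]
  exact h v

end SupportFunction

theorem zero_mem_interior_of_symmetric {n : ℕ} {K : Set (Euc n)} (hconv : Convex ℝ K)
    (hsymm : ∀ x ∈ K, -x ∈ K) (hvol : volume K ≠ 0) : (0 : Euc n) ∈ interior K := by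
  obtain ⟨y, hy⟩ : (interior K).Nonempty := by
    rw [hconv.interior_nonempty_iff_affineSpan_eq_top]
    by_contra htop
    exact hvol (measure_mono_null (subset_affineSpan ℝ K)
      (Measure.addHaar_affineSubspace volume _ htop))
  have := hconv.combo_interior_self_mem_interior hy (hsymm y (interior_subset hy))
    (by norm_num : (0 : ℝ) < 1 / 2) (by norm_num : (0 : ℝ) ≤ 1 / 2) (by norm_num)
  rwa [smul_neg, add_neg_cancel] at this

section IntegralBounds

variable {n : ℕ} {K : Set (Euc n)}

theorem Euc.dim_pos {θ : Euc n} (hθ : θ ≠ 0) : 0 < n :=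
  Nat.pos_of_ne_zero fun h => hθ (by subst h; exact Subsingleton.elim _ _)

theorem volume_slab_le {θ : Euc n} (hθ : θ ≠ 0) (R a b : ℝ) :
    volume {x : Euc n | ‖x‖ ≤ R ∧ a ≤ ⟪x, θ⟫ ∧ ⟪x, θ⟫ ≤ b} ≤
      ENNReal.ofReal ((b - a) / ‖θ‖) * ENNReal.ofReal (2 * R) ^ (n - 1) := by
  set i₀ : Fin n := ⟨0, Euc.dim_pos hθ⟩
  obtain ⟨b₀, hb₀⟩ := Orthonormal.exists_orthonormalBasis_extension_of_card_eq (𝕜 := ℝ)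
    (v := fun _ : Fin n => ‖θ‖⁻¹ • θ) (s := {i₀}) (by simp)
    ⟨fun _ => norm_smul_inv_norm hθ, fun i j hij => absurd (Subtype.ext (i.2.trans j.2.symm)) hij⟩
  have hcoord : ∀ x : Euc n, b₀.repr x i₀ = ⟪x, θ⟫ / ‖θ‖ := fun x => by
    rw [b₀.repr_apply_apply, hb₀ i₀ rfl, inner_smul_left, real_inner_comm]
    simp [div_eq_inv_mul]
  set e := fun x : Euc n => (MeasurableEquiv.toLp 2 (Fin n → ℝ)).symm (b₀.repr x)
  have he : MeasurePreserving e volume volume :=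
    (EuclideanSpace.volume_preserving_symm_measurableEquiv_toLp (Fin n)).comp
      b₀.repr.measurePreserving
  set box : Fin n → Set ℝ := fun j => if j = i₀ then Icc (a / ‖θ‖) (b / ‖θ‖) else Icc (-R) R
  have hsub : {x : Euc n | ‖x‖ ≤ R ∧ a ≤ ⟪x, θ⟫ ∧ ⟪x, θ⟫ ≤ b} ⊆ e ⁻¹' univ.pi box := by
    rintro x ⟨hxR, hxa, hxb⟩ j -
    change b₀.repr x j ∈ box j
    by_cases hj : j = i₀
    · subst hj
      simp only [box, if_pos rfl, hcoord, mem_Icc]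
      constructor <;> gcongr
    · simp only [box, if_neg hj]
      exact abs_le.1 <| ((PiLp.norm_apply_le _ j).trans_eq (b₀.repr.norm_map x)).trans hxR
  calc volume {x : Euc n | ‖x‖ ≤ R ∧ a ≤ ⟪x, θ⟫ ∧ ⟪x, θ⟫ ≤ b}
      ≤ volume (e ⁻¹' univ.pi box) := measure_mono hsub
    _ = ∏ j, volume (box j) := by
        rw [he.measure_preimage (MeasurableSet.univ_pi fun j => by
          unfold box; split_ifs <;> exact measurableSet_Icc).nullMeasurableSet, volume_pi_pi]
    _ = ENNReal.ofReal ((b - a) / ‖θ‖) * ENNReal.ofReal (2 * R) ^ (n - 1) := by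
        rw [← Finset.mul_prod_erase Finset.univ _ (Finset.mem_univ i₀),
          Finset.prod_congr rfl (g := fun _ => volume (Icc (-R) R)) fun j hj => by
            simp only [box, if_neg (Finset.mem_erase.1 hj).1],
          Finset.prod_const, Finset.card_erase_of_mem (Finset.mem_univ i₀), Finset.card_univ,
          Fintype.card_fin]
        simp only [box, if_pos rfl, Real.volume_Icc, sub_div]
        ring_nf

theorem integrableOn_abs_inner_rpow (hK : IsCompact K) {p : ℝ} (hp : 0 ≤ p) (θ : Euc n) :
    IntegrableOn (fun x => |⟪x, θ⟫| ^ p) K :=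
  ((continuous_id.inner continuous_const).abs.rpow_const fun _ => Or.inr hp).continuousOn
    |>.integrableOn_compact hK

theorem volume_sdiff_abs_inner_le_le {R m t : ℝ} {θ : Euc n} (hKR : K ⊆ closedBall 0 R)
    (hm : ∀ x ∈ K, |⟪x, θ⟫| ≤ m) (hm0 : 0 ≤ m) (hmR : m ≤ R * ‖θ‖) (ht : 0 ≤ t) :
    volume (K \ {x | |⟪x, θ⟫| ≤ m * (1 - t)}) ≤ ENNReal.ofReal ((2 * R) ^ n * t) := by
  rcases eq_or_ne θ 0 with rfl | hθ
  · have hm_zero : m = 0 := by simp only [norm_zero, mul_zero] at hmR; linarith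
    simp [hm_zero]
  have hθn : 0 < ‖θ‖ := norm_pos_iff.2 hθ
  have hR : 0 ≤ R := nonneg_of_mul_nonneg_left (hm0.trans hmR) hθn
  have hsub : K \ {x | |⟪x, θ⟫| ≤ m * (1 - t)} ⊆
      {x | ‖x‖ ≤ R ∧ m * (1 - t) ≤ ⟪x, θ⟫ ∧ ⟪x, θ⟫ ≤ m} ∪
        {x | ‖x‖ ≤ R ∧ -m ≤ ⟪x, θ⟫ ∧ ⟪x, θ⟫ ≤ -(m * (1 - t))} := by
    rintro x ⟨hxK, hxS⟩
    have hxR : ‖x‖ ≤ R := by simpa using hKR hxK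
    obtain ⟨hlo, hhi⟩ := abs_le.1 (hm x hxK)
    rw [mem_ofPred_eq, not_le] at hxS
    rcases le_or_gt 0 ⟪x, θ⟫ with hsgn | hsgn
    · rw [abs_of_nonneg hsgn] at hxS
      exact Or.inl ⟨hxR, hxS.le, hhi⟩
    · rw [abs_of_neg hsgn] at hxS
      exact Or.inr ⟨hxR, hlo, by linarith⟩
  have hwidth : m * t / ‖θ‖ ≤ R * t := by
    rw [div_le_iff₀ hθn]
    nlinarith
  calc volume (K \ {x | |⟪x, θ⟫| ≤ m * (1 - t)})
      ≤ 2 * (ENNReal.ofReal (m * t / ‖θ‖) * ENNReal.ofReal (2 * R) ^ (n - 1)) := by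
        refine (measure_mono hsub).trans ((measure_union_le _ _).trans ?_)
        rw [two_mul]
        gcongr <;> refine (volume_slab_le hθ _ _ _).trans_eq ?_ <;> ring_nf
    _ ≤ ENNReal.ofReal (2 * ((R * t) * (2 * R) ^ (n - 1))) := by
        rw [← ENNReal.ofReal_pow (by positivity), ← ENNReal.ofReal_mul (by positivity),
          ENNReal.ofReal_mul zero_le_two, ENNReal.ofReal_ofNat]
        gcongr
    _ = ENNReal.ofReal ((2 * R) ^ n * t) := by
        rw [← pow_sub_one_mul (Euc.dim_pos hθ).ne']
        ring_nf

theorem setIntegral_abs_inner_rpow_le {R m p t : ℝ} {θ : Euc n} (hK : IsCompact K)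
    (hvol : volume K ≤ 1) (hR : 0 ≤ R) (hKR : K ⊆ closedBall 0 R) (hm : ∀ x ∈ K, |⟪x, θ⟫| ≤ m)
    (hm0 : 0 ≤ m) (hmR : m ≤ R * ‖θ‖) (hp : 0 ≤ p) (ht0 : 0 ≤ t) (ht1 : t ≤ 1) :
    ∫ x in K, |⟪x, θ⟫| ^ p ≤ m ^ p * ((1 - t) ^ p + (2 * R) ^ n * t) := by
  set S := {x : Euc n | |⟪x, θ⟫| ≤ m * (1 - t)}
  have hS : MeasurableSet S :=
    (isClosed_le (continuous_id.inner continuous_const).abs continuous_const).measurableSet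
  have hint := integrableOn_abs_inner_rpow hK hp θ
  have hfin : ∀ s ⊆ K, volume s ≠ ∞ := fun s hs =>
    ((measure_mono hs).trans_lt (hvol.trans_lt ENNReal.one_lt_top)).ne
  have hinner : ∫ x in K ∩ S, |⟪x, θ⟫| ^ p ≤ (m * (1 - t)) ^ p := by
    refine (setIntegral_le_mul_measureReal (hK.isClosed.measurableSet.inter hS)
      (hfin _ inter_subset_left) (hint.mono_set inter_subset_left)
      fun x hx => rpow_le_rpow (abs_nonneg _) hx.2 hp).trans ?_
    refine mul_le_of_le_one_right (rpow_nonneg (mul_nonneg hm0 (by linarith)) _) ?_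
    exact ENNReal.toReal_le_of_le_ofReal zero_le_one
      (by simpa using (measure_mono inter_subset_left).trans hvol)
  have houter : ∫ x in K \ S, |⟪x, θ⟫| ^ p ≤ m ^ p * ((2 * R) ^ n * t) := by
    refine (setIntegral_le_mul_measureReal (hK.isClosed.measurableSet.diff hS)
      (hfin _ sdiff_subset) (hint.mono_set sdiff_subset)
      fun x hx => rpow_le_rpow (abs_nonneg _) (hm x hx.1) hp).trans ?_
    gcongr
    exact ENNReal.toReal_le_of_le_ofReal (by positivity)
      (volume_sdiff_abs_inner_le_le hKR hm hm0 hmR ht0)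
  rw [← integral_inter_add_sdiff hS hint, mul_add, ← mul_rpow hm0 (by linarith)]
  exact add_le_add hinner houter

theorem le_setIntegral_abs_inner_rpow (hconv : Convex ℝ K) (hK : IsCompact K)
    {x₀ θ : Euc n} {p s : ℝ} (hx₀ : x₀ ∈ K) (hmax : ∀ x ∈ K, |⟪x, θ⟫| ≤ ⟪x₀, θ⟫)
    (hs0 : 0 ≤ s) (hs1 : s ≤ 1 / 2) (hp : 0 ≤ p) :
    ⟪x₀, θ⟫ ^ p * ((1 - 2 * s) ^ p * s ^ n) * volume.real K ≤ ∫ x in K, |⟪x, θ⟫| ^ p := by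
  set m := ⟪x₀, θ⟫
  have hm0 : 0 ≤ m := (abs_nonneg _).trans (hmax x₀ hx₀)
  set Ks := AffineMap.homothety x₀ s '' K
  have hhom : ∀ y, AffineMap.homothety x₀ s y = s • y + (1 - s) • x₀ := fun y => by
    rw [AffineMap.homothety_apply, vsub_eq_sub, vadd_eq_add, smul_sub, sub_smul, one_smul]
    abel
  have hKs : Ks ⊆ K := by
    rintro _ ⟨y, hy, rfl⟩
    rw [hhom]
    exact hconv hy hx₀ hs0 (by linarith) (by ring)
  have hKs_meas : MeasurableSet Ks :=
    (hK.image (AffineMap.homothety_continuous x₀ s)).isClosed.measurableSet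
  have hvolKs : volume.real Ks = s ^ n * volume.real K := by
    rw [measureReal_def, Measure.addHaar_image_homothety, finrank_euclideanSpace_fin,
      abs_of_nonneg (by positivity), ENNReal.toReal_mul, ENNReal.toReal_ofReal (by positivity),
      measureReal_def]
  have hlow : ∀ y ∈ Ks, (1 - 2 * s) * m ≤ ⟪y, θ⟫ := by
    rintro _ ⟨y, hy, rfl⟩
    rw [hhom, inner_add_left, real_inner_smul_left, real_inner_smul_left]
    nlinarith [neg_abs_le ⟪y, θ⟫, hmax y hy]
  have hint := integrableOn_abs_inner_rpow hK hp θ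
  calc m ^ p * ((1 - 2 * s) ^ p * s ^ n) * volume.real K
      = ((1 - 2 * s) * m) ^ p * volume.real Ks := by
        rw [hvolKs, mul_rpow (by linarith) hm0]
        ring
    _ ≤ ∫ x in Ks, |⟪x, θ⟫| ^ p := by
        refine setIntegral_ge_of_const_le_real hKs_meas ?_ (fun x hx => ?_) (hint.mono_set hKs)
        · exact ((measure_mono hKs).trans_lt hK.measure_lt_top).ne
        · have := hlow x hx
          exact rpow_le_rpow (mul_nonneg (by linarith) hm0) (this.trans (le_abs_self _)) hp
    _ ≤ ∫ x in K, |⟪x, θ⟫| ^ p :=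
        setIntegral_mono_set hint (Eventually.of_forall fun _ => by positivity) hKs.eventuallyLE

end IntegralBounds

section Inclusions

variable {n : ℕ} {K : Set (Euc n)}

theorem zpLowerScale_smul_subset_ZpBody (hconv : Convex ℝ K) (hK : IsCompact K)
    (hsymm : ∀ x ∈ K, -x ∈ K) (hvol : volume K = 1) {p : ℝ} (hp : 2 < p) :
    zpLowerScale n p • K ⊆ ZpBody K p := by
  rintro _ ⟨x, hx, rfl⟩ v
  obtain ⟨x₀, hx₀, hx₀v⟩ := exists_inner_eq_suppFn hK ⟨x, hx⟩ v
  have hmax : ∀ y ∈ K, |⟪y, v⟫| ≤ ⟪x₀, v⟫ := fun y hy => hx₀v ▸ abs_inner_le_suppFn hK hsymm v hy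
  have h12 : 0 ≤ 1 - 2 / p := by rw [sub_nonneg, div_le_one (by linarith)]; exact hp.le
  have hI := le_setIntegral_abs_inner_rpow hconv hK hx₀ hmax (p := p) (s := 1 / p)
    (by positivity) (one_div_le_one_div_of_le two_pos hp.le) (by linarith)
  rw [measureReal_def, hvol, ENNReal.toReal_one, mul_one, hx₀v, mul_one_div] at hI
  have hm0 : 0 ≤ suppFn K v := hx₀v ▸ (abs_nonneg _).trans (hmax x₀ hx₀)
  calc ⟪zpLowerScale n p • x, v⟫ = zpLowerScale n p * ⟪x, v⟫ := real_inner_smul_left _ _ _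
    _ ≤ zpLowerScale n p * suppFn K v :=
        mul_le_mul_of_nonneg_left (inner_le_suppFn hK v hx) (zpLowerScale_pos n hp).le
    _ = (suppFn K v ^ p * ((1 - 2 / p) ^ p * (1 / p) ^ n)) ^ (1 / p) := by
        rw [rpow_mul_rpow_one_div hm0 (by positivity) (by positivity), zpLowerScale, mul_comm]
    _ ≤ (∫ x in K, |⟪x, v⟫| ^ p) ^ (1 / p) := by gcongr

theorem ZpBody_subset_smul (hconv : Convex ℝ K) (hK : IsCompact K) (hne : K.Nonempty)
    (hsymm : ∀ x ∈ K, -x ∈ K) (hvol : volume K ≤ 1) {R p t : ℝ} (hR : 0 < R)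
    (hKR : K ⊆ closedBall 0 R) (hp : 0 < p) (ht0 : 0 < t) (ht1 : t ≤ 1) :
    ZpBody K p ⊆ ((1 - t) ^ p + (2 * R) ^ n * t) ^ (1 / p) • K := by
  have hB : 0 < (1 - t) ^ p + (2 * R) ^ n * t := by
    have : 0 ≤ (1 - t) ^ p := rpow_nonneg (by linarith) _
    positivity
  intro y hy
  refine mem_smul_of_inner_le_mul_suppFn hconv hK hne (rpow_pos_of_pos hB _) fun v => ?_
  obtain ⟨x, hx⟩ := hne
  have hm0 : 0 ≤ suppFn K v := (abs_nonneg _).trans (abs_inner_le_suppFn hK hsymm v hx)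
  calc ⟪y, v⟫ ≤ (∫ x in K, |⟪x, v⟫| ^ p) ^ (1 / p) := hy v
    _ ≤ (suppFn K v ^ p * ((1 - t) ^ p + (2 * R) ^ n * t)) ^ (1 / p) := by
        gcongr
        exact setIntegral_abs_inner_rpow_le hK hvol hR.le hKR
          (fun _ hz => abs_inner_le_suppFn hK hsymm v hz) hm0 (suppFn_le_mul_norm ⟨x, hx⟩ hKR v)
          hp.le ht0.le ht1
    _ = ((1 - t) ^ p + (2 * R) ^ n * t) ^ (1 / p) * suppFn K v := by
        rw [rpow_mul_rpow_one_div hm0 hB.le hp.ne', mul_comm]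

end Inclusions

/-- For a symmetric convex body `K` of volume 1 in `ℝ^n`:
`n|K°| ≤ liminf_{p→∞} (p/log p)(|Z_p(K)°| - |K°|)` and
`limsup_{p→∞} (p/log p)(|Z_p(K)°| - |K°|) ≤ n²|K°|`. -/
theorem stmt3 {n : ℕ} (K : Set (Euc n))
    (hconv : Convex ℝ K) (hcomp : IsCompact K)
    (hsymm : ∀ x ∈ K, -x ∈ K) (hvol : volume K = 1) :
    (n : ℝ) * (volume (polarSet K)).toReal ≤
        Filter.liminf
          (fun p : ℝ => (p / Real.log p) *
            ((volume (polarSet (ZpBody K p))).toReal - (volume (polarSet K)).toReal)) atTop ∧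
      Filter.limsup
          (fun p : ℝ => (p / Real.log p) *
            ((volume (polarSet (ZpBody K p))).toReal - (volume (polarSet K)).toReal)) atTop ≤
        (n : ℝ) ^ 2 * (volume (polarSet K)).toReal := by
  have hne : K.Nonempty := nonempty_of_measure_ne_zero (μ := volume) (by simp [hvol])
  obtain ⟨r, hr, hrK⟩ := nhds_basis_closedBall.mem_iff.1 <| mem_interior_iff_mem_nhds.1 <|
    zero_mem_interior_of_symmetric hconv hsymm (by simp [hvol])
  obtain ⟨R, hR, hKR⟩ := hcomp.isBounded.subset_closedBall_lt 0 0
  have hV : volume (polarSet K) ≠ ∞ :=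
    ((measure_mono (polarSet_subset_closedBall hr hrK)).trans_lt measure_closedBall_lt_top).ne
  set V := (volume (polarSet K)).toReal
  have hsqueeze : ∀ᶠ p in atTop,
      p / log p * ((zpUpperScale n R p)⁻¹ ^ n - 1) * V ≤
          p / log p * ((volume (polarSet (ZpBody K p))).toReal - V) ∧
        p / log p * ((volume (polarSet (ZpBody K p))).toReal - V) ≤
          p / log p * ((zpLowerScale n p)⁻¹ ^ n - 1) * V := by
    filter_upwards [eventually_gt_atTop 2] with p hp
    obtain ⟨hlo, hhi⟩ := toReal_volume_polarSet_mem_Icc (zpLowerScale_pos n hp)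
      (zpUpperScale_pos n hR (by linarith)) hV
      (zpLowerScale_smul_subset_ZpBody hconv hcomp hsymm hvol hp)
      (ZpBody_subset_smul hconv hcomp hne hsymm hvol.le hR hKR (by linarith)
        (log_div_self_mem_Ioc (by linarith)).1 (log_div_self_mem_Ioc (by linarith)).2)
    have hpos : 0 ≤ p / log p := div_nonneg (by linarith) (log_nonneg (by linarith))
    constructor <;> rw [mul_assoc, sub_mul, one_mul] <;> gcongr
  exact le_liminf_and_limsup_le_of_squeeze ((tendsto_zpUpperScale n hR).mul_const V)
    ((tendsto_zpLowerScale n).mul_const V)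
    (hsqueeze.mono fun _ h => h.1) (hsqueeze.mono fun _ h => h.2)
end
end

section
/- Let K be a symmetric convex polytope in ℝ^n, let θ ∈ G_K, and let s_θ = min{s > 0 : g(θ,s) = 1}. Then there is a vertex v of K such that for all s_θ ≤ s ≤ h_K(θ): {x ∈ K : ⟨x,θ⟩ ≥ s} = conv(K ∩ (θ^⊥ + sθ), v), the convex hull of the section at height s and the vertex v. -/
open MeasureTheory Filter Set Metric
open scoped RealInnerProductSpace Topology ENNReal NNReal

noncomputable section

/-- `g(θ, s)`: the number of vertices `v ∈ V` with `⟨v, θ⟩ ≥ s`. -/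
noncomputable def gCount {n : ℕ} (V : Finset (Euc n)) (θ : Euc n) (s : ℝ) : ℕ :=
  {v ∈ (V : Set (Euc n)) | s ≤ ⟪v, θ⟫}.ncard

/-- `B_K`: the directions `θ ∈ S^{n-1}` with `g(θ,s) > 1` for all `s ≤ h_K(θ)`. -/
def badSet {n : ℕ} (K : Set (Euc n)) (V : Finset (Euc n)) : Set (Euc n) :=
  {θ | ‖θ‖ = 1 ∧ ∀ s ≤ suppFn K θ, 1 < gCount V θ s}

/-- `G_K`: the directions `θ ∈ S^{n-1}` with `g(θ,s) = 1` for some `s < h_K(θ)`. -/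
def goodSet {n : ℕ} (K : Set (Euc n)) (V : Finset (Euc n)) : Set (Euc n) :=
  {θ | ‖θ‖ = 1 ∧ ∃ s < suppFn K θ, gCount V θ s = 1}

/-- `s_θ = min {s > 0 : g(θ,s) = 1}`. -/
noncomputable def sTheta {n : ℕ} (V : Finset (Euc n)) (θ : Euc n) : ℝ :=
  sInf {s | 0 < s ∧ gCount V θ s = 1}

/-- `A(δ)`: the directions `θ ∈ S^{n-1}` at distance `< δ` from some `u ∈ B_K`. -/
def Aset {n : ℕ} (K : Set (Euc n)) (V : Finset (Euc n)) (δ : ℝ) : Set (Euc n) :=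
  {θ | ‖θ‖ = 1 ∧ ∃ u ∈ badSet K V, ‖θ - u‖ < δ}

lemma innerLin {n : ℕ} (θ : Euc n) : IsLinearMap ℝ (fun x : Euc n => ⟪x, θ⟫) :=
  ⟨fun a b => inner_add_left a b θ, fun c x => real_inner_smul_left x θ c⟩

lemma key {n : ℕ} (V : Finset (Euc n)) (θ v0 : Euc n) (hv0 : v0 ∈ V) (s : ℝ)
    (hw : ∀ w ∈ V, w ≠ v0 → ⟪w, θ⟫ ≤ s) (hsh : s ≤ ⟪v0, θ⟫) :
    {x ∈ convexHull ℝ (V : Set (Euc n)) | s ≤ ⟪x, θ⟫} =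
      convexHull ℝ ((convexHull ℝ (V : Set (Euc n)) ∩ {x : Euc n | ⟪x, θ⟫ = s}) ∪ {v0}) := by
  classical
  have hKconv : Convex ℝ (convexHull ℝ (V : Set (Euc n))) := convex_convexHull ℝ _
  have hLconv : Convex ℝ {x ∈ convexHull ℝ (V : Set (Euc n)) | s ≤ ⟪x, θ⟫} :=
    hKconv.inter (convex_halfSpace_ge (innerLin θ) s)
  apply Subset.antisymm
  · rintro x ⟨hxK, hxs⟩
    by_cases hxv : x = v0
    · exact subset_convexHull ℝ _ (Or.inr (by simp [hxv]))
    by_cases hxe : ⟪x, θ⟫ = s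
    · exact subset_convexHull ℝ _ (Or.inl ⟨hxK, hxe⟩)
    have ha : s < ⟪x, θ⟫ := lt_of_le_of_ne hxs (Ne.symm hxe)
    have hne : ((V.erase v0 : Finset (Euc n)) : Set (Euc n)).Nonempty := by
      rcases Finset.eq_empty_or_nonempty (V.erase v0) with he | hne
      · rcases (Finset.erase_eq_empty_iff V v0).mp he with h | h
        · simp [h] at hv0
        · rw [h] at hxK
          simp only [Finset.coe_singleton, convexHull_singleton, mem_singleton_iff] at hxK
          exact absurd hxK hxv
      · exact Finset.coe_nonempty.mpr hne
    have hVins : (V : Set (Euc n)) = insert v0 ((V.erase v0 : Finset (Euc n)) : Set (Euc n)) := by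
      rw [← Finset.coe_insert, Finset.insert_erase hv0]
    have hxK0 := hxK
    rw [hVins, convexHull_insert hne, mem_convexJoin] at hxK
    obtain ⟨v0', hv0', z, hz, hxseg⟩ := hxK
    rw [mem_singleton_iff] at hv0'
    rw [hv0'] at hxseg
    have hzK : z ∈ convexHull ℝ (V : Set (Euc n)) :=
      convexHull_mono (Finset.coe_subset.mpr (Finset.erase_subset _ _)) hz
    have hzs : ⟪z, θ⟫ ≤ s :=
      convexHull_min
        (fun w hw' => hw w (Finset.mem_of_mem_erase hw') (Finset.ne_of_mem_erase hw'))
        (convex_halfSpace_le (innerLin θ) s) hz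
    obtain ⟨t, u, ht, hu, htu, hx⟩ := hxseg
    have hu' : u = 1 - t := by linarith
    have hab : ⟪z, θ⟫ < ⟪x, θ⟫ := lt_of_le_of_lt hzs ha
    obtain ⟨α, hα⟩ : ∃ α : ℝ, α = (s - ⟪z, θ⟫) / (⟪x, θ⟫ - ⟪z, θ⟫) := ⟨_, rfl⟩
    have habne : ⟪x, θ⟫ - ⟪z, θ⟫ ≠ 0 := ne_of_gt (by linarith)
    have hα0 : 0 ≤ α := hα ▸ div_nonneg (by linarith) (by linarith)
    have hα1 : α < 1 := hα ▸ (div_lt_one (by linarith)).mpr (by linarith)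
    have ht1 : t ≤ 1 := by linarith
    have hαt : α * t < 1 := lt_of_le_of_lt (mul_le_of_le_one_right hα0 ht1) hα1
    have hd : (1 : ℝ) - α * t ≠ 0 := ne_of_gt (by linarith)
    have hwK : (α • x + (1 - α) • z) ∈ convexHull ℝ (V : Set (Euc n)) :=
      hKconv hxK0 hzK hα0 (by linarith) (by ring)
    have hws : ⟪α • x + (1 - α) • z, θ⟫ = s := by
      have h1 : α * (⟪x, θ⟫ - ⟪z, θ⟫) = s - ⟪z, θ⟫ := by
        rw [hα]; exact div_mul_cancel₀ _ habne
      simp only [inner_add_left, real_inner_smul_left]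
      linear_combination h1
    obtain ⟨β, hβ⟩ : ∃ β : ℝ, β = t * (1 - α) / (1 - α * t) := ⟨_, rfl⟩
    have hβd : β * (1 - α * t) = t * (1 - α) := by
      rw [hβ]; exact div_mul_cancel₀ _ hd
    have hβ0 : 0 ≤ β := hβ ▸ div_nonneg (by nlinarith) (by linarith)
    have hβ1 : β ≤ 1 := by
      rw [hβ, div_le_one (by linarith)]
      nlinarith
    have hwmem : (α • x + (1 - α) • z) ∈
        convexHull ℝ ((convexHull ℝ (V : Set (Euc n)) ∩ {x : Euc n | ⟪x, θ⟫ = s}) ∪ {v0}) :=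
      subset_convexHull ℝ _ (Or.inl ⟨hwK, hws⟩)
    have hv0mem : v0 ∈
        convexHull ℝ ((convexHull ℝ (V : Set (Euc n)) ∩ {x : Euc n | ⟪x, θ⟫ = s}) ∪ {v0}) :=
      subset_convexHull ℝ _ (Or.inr rfl)
    have hcomb := (convex_convexHull ℝ
        ((convexHull ℝ (V : Set (Euc n)) ∩ {x : Euc n | ⟪x, θ⟫ = s}) ∪ {v0}))
        hwmem hv0mem (by linarith : (0:ℝ) ≤ 1 - β) hβ0 (by ring)
    have hxeq : x = (1 - β) • (α • x + (1 - α) • z) + β • v0 := by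
      rw [← hx, hu']
      match_scalars
      · linear_combination -hβd
      · linear_combination hβd
    rw [hxeq]
    exact hcomb
  · refine convexHull_min ?_ hLconv
    rintro x (⟨hxK, hxs⟩ | hx)
    · exact ⟨hxK, le_of_eq hxs.symm⟩
    · rw [mem_singleton_iff] at hx
      subst hx
      exact ⟨subset_convexHull ℝ _ hv0, hsh⟩

/-- For a symmetric convex polytope `K` and `θ ∈ G_K`, there is a vertex `v` of `K` such that
for all `s_θ ≤ s ≤ h_K(θ)`: `{x ∈ K : ⟨x,θ⟩ ≥ s} = conv(K ∩ (θ^⊥ + sθ), v)`. -/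
theorem stmt8 {n : ℕ} (K : Set (Euc n)) (V : Finset (Euc n))
    (hKV : K = convexHull ℝ (V : Set (Euc n)))
    (hVext : (V : Set (Euc n)) = K.extremePoints ℝ)
    (hsymm : ∀ x ∈ K, -x ∈ K)
    (θ : Euc n) (hθ : θ ∈ goodSet K V) :
    ∃ v ∈ V, ∀ s : ℝ, sTheta V θ ≤ s → s ≤ suppFn K θ →
      {x ∈ K | s ≤ ⟪x, θ⟫} =
        convexHull ℝ ((K ∩ {x : Euc n | ⟪x, θ⟫ = s}) ∪ {v}) := by
  classical
  obtain ⟨hθn, s0, hs0h, hg0⟩ := hθ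
  -- the set counted at level s0 is a singleton
  obtain ⟨a, ha⟩ := Set.ncard_eq_one.mp hg0
  have haV : a ∈ V := by
    have : a ∈ {v ∈ (V : Set (Euc n)) | s0 ≤ ⟪v, θ⟫} := ha ▸ rfl
    exact this.1
  have hVne : V.Nonempty := ⟨a, haV⟩
  -- maximal vertex
  obtain ⟨v0, hv0V, hv0max⟩ := V.exists_max_image (fun w => ⟪w, θ⟫) hVne
  have hub : ∀ x ∈ K, ⟪x, θ⟫ ≤ ⟪v0, θ⟫ := by
    intro x hx
    rw [hKV] at hx
    exact convexHull_min (fun w hw => hv0max w hw) (convex_halfSpace_le (innerLin θ) _) hx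
  have hv0K : v0 ∈ K := hKV ▸ subset_convexHull ℝ _ hv0V
  have hsupp : suppFn K θ = ⟪v0, θ⟫ := by
    apply IsGreatest.csSup_eq
    exact ⟨⟨v0, hv0K, rfl⟩, by rintro y ⟨x, hx, rfl⟩; exact hub x hx⟩
  have hs0v0 : s0 < ⟪v0, θ⟫ := hsupp ▸ hs0h
  -- a = v0
  have hav0 : a = v0 := by
    have : v0 ∈ {v ∈ (V : Set (Euc n)) | s0 ≤ ⟪v, θ⟫} := ⟨hv0V, le_of_lt hs0v0⟩
    rw [ha, mem_singleton_iff] at this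
    exact this.symm
  have hA0 : {v ∈ (V : Set (Euc n)) | s0 ≤ ⟪v, θ⟫} = {v0} := by rw [ha, hav0]
  -- every other vertex is strictly below s0
  have hwlt : ∀ w ∈ V, w ≠ v0 → ⟪w, θ⟫ < s0 := by
    intro w hwV hwne
    by_contra hcon
    push_neg at hcon
    have : w ∈ {v ∈ (V : Set (Euc n)) | s0 ≤ ⟪v, θ⟫} := ⟨hwV, hcon⟩
    rw [hA0, mem_singleton_iff] at this
    exact hwne this
  -- other vertices are below sTheta
  have hlb : ∀ w ∈ V, w ≠ v0 → ⟪w, θ⟫ ≤ sTheta V θ := by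
    intro w hwV hwne
    by_cases hS : {s | 0 < s ∧ gCount V θ s = 1}.Nonempty
    · apply le_csInf hS
      rintro s' ⟨hs'pos, hg'⟩
      obtain ⟨a', ha'⟩ := Set.ncard_eq_one.mp hg'
      have ha'mem : a' ∈ {v ∈ (V : Set (Euc n)) | s' ≤ ⟪v, θ⟫} := ha' ▸ rfl
      have hs'le : s' ≤ ⟪v0, θ⟫ := le_trans ha'mem.2 (hv0max a' ha'mem.1)
      have hv0in : v0 ∈ {v ∈ (V : Set (Euc n)) | s' ≤ ⟪v, θ⟫} := ⟨hv0V, hs'le⟩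
      rw [ha', mem_singleton_iff] at hv0in
      have hwnotin : w ∉ {v ∈ (V : Set (Euc n)) | s' ≤ ⟪v, θ⟫} := by
        rw [ha', mem_singleton_iff, ← hv0in]
        exact hwne
      have : ¬ s' ≤ ⟪w, θ⟫ := fun hc => hwnotin ⟨hwV, hc⟩
      linarith [not_le.mp this]
    · -- empty index set: sTheta = 0 and h = 0
      have hSempty : {s | 0 < s ∧ gCount V θ s = 1} = ∅ := not_nonempty_iff_eq_empty.mp hS
      have hst0 : sTheta V θ = 0 := by rw [sTheta, hSempty, Real.sInf_empty]
      have hh0 : ⟪v0, θ⟫ ≤ 0 := by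
        by_contra hcon
        push_neg at hcon
        set s' := max (⟪v0, θ⟫ / 2) s0 with hs'
        have hs'pos : 0 < s' := lt_max_of_lt_left (by linarith)
        have hs'le : s' ≤ ⟪v0, θ⟫ := max_le (by linarith) (le_of_lt hs0v0)
        have hs'ge : s0 ≤ s' := le_max_right _ _
        have hA' : {v ∈ (V : Set (Euc n)) | s' ≤ ⟪v, θ⟫} = {v0} := by
          apply Subset.antisymm
          · rintro u ⟨huV, hus⟩
            have : u ∈ {v ∈ (V : Set (Euc n)) | s0 ≤ ⟪v, θ⟫} := ⟨huV, le_trans hs'ge hus⟩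
            rw [hA0] at this
            exact this
          · rintro u hu
            rw [mem_singleton_iff] at hu
            subst hu
            exact ⟨hv0V, hs'le⟩
        have : s' ∈ {s | 0 < s ∧ gCount V θ s = 1} :=
          ⟨hs'pos, by rw [gCount, hA', Set.ncard_singleton]⟩
        rw [hSempty] at this
        exact this
      rw [hst0]
      exact le_trans (hv0max w hwV) hh0
  refine ⟨v0, hv0V, fun s hs1 hs2 => ?_⟩
  rw [hKV]
  exact key V θ v0 hv0V s
    (fun w hwV hwne => le_trans (hlb w hwV hwne) hs1)
    (by rw [← hsupp]; exact hs2)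
end
end

section
/- Let K be a symmetric convex polytope in ℝ^n, let θ ∈ G_K and s_θ = min{s > 0 : g(θ,s) = 1}. Then for all s_θ ≤ s ≤ h_K(θ): f_{K,θ}(s) = f_{K,θ}(s_θ) · ((1 − s/h_K(θ)) / (1 − s_θ/h_K(θ)))^{n−1}. -/
/-!
Since `θ ∈ G_K`, some level `s₀ < h_K(θ)` is reached by a single vertex `v`. Then
`h_K(θ) = ⟨v, θ⟩`, every other vertex lies at height `≤ s_θ` in direction `θ`, and
`s_θ < h_K(θ)`. Hence, writing `K` as the cone with apex `v` over the convex hull of the other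
vertices, the slice of `K` at any height `s ∈ [s_θ, h_K(θ)]` is the image of the slice at height
`s_θ` under the homothety of centre `v` and ratio `λ = (h_K(θ) - s) / (h_K(θ) - s_θ)`, which
multiplies `(n-1)`-dimensional Hausdorff measure by `λ ^ (n-1)`. Symmetry gives `h_K(θ) ≥ 0`
and, if `h_K(θ) > 0`, a vertex other than `v`.
-/

open MeasureTheory Filter Set Metric
open scoped RealInnerProductSpace Topology ENNReal NNReal

noncomputable section

/-- The parallel section function `f_{K,θ}(t) = vol_{n-1}(K ∩ (θ^⊥ + tθ))`, the
`(n-1)`-dimensional (Hausdorff) volume of the slice of `K` at height `t` in direction `θ`. -/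
noncomputable def sliceVol {n : ℕ} (K : Set (Euc n)) (θ : Euc n) (t : ℝ) : ℝ :=
  (μH[(n : ℝ) - 1] (K ∩ {x : Euc n | ⟪x, θ⟫ = t})).toReal

theorem LinearMap.le_of_mem_convexHull {E : Type*} [AddCommGroup E] [Module ℝ E]
    (ℓ : E →ₗ[ℝ] ℝ) {S : Set E} {c : ℝ} (hS : ∀ w ∈ S, ℓ w ≤ c) {x : E}
    (hx : x ∈ convexHull ℝ S) : ℓ x ≤ c :=
  convexHull_min hS (convex_halfSpace_le ℓ.isLinear c) hx

theorem inner_le_of_mem_convexHull {E : Type*} [NormedAddCommGroup E] [InnerProductSpace ℝ E]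
    {S : Set E} {θ : E} {c : ℝ} (hS : ∀ w ∈ S, ⟪w, θ⟫ ≤ c) {x : E} (hx : x ∈ convexHull ℝ S) :
    ⟪x, θ⟫ ≤ c :=
  ((innerₗ E).flip θ).le_of_mem_convexHull hS hx

theorem LinearMap.apply_lineMap_eq {E : Type*} [AddCommGroup E] [Module ℝ E]
    (ℓ : E →ₗ[ℝ] ℝ) (p q : E) (t : ℝ) :
    ℓ (AffineMap.lineMap p q t) = ℓ p + t * (ℓ q - ℓ p) := by
  simp only [AffineMap.lineMap_apply_module', map_add, map_smul, map_sub, smul_eq_mul]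
  ring

theorem convexHull_insert_inter_level_eq_homothety_image {E : Type*} [AddCommGroup E]
    [Module ℝ E] (ℓ : E →ₗ[ℝ] ℝ) {v : E} {S : Set E} (hS : S.Nonempty) {σ s : ℝ}
    (hSσ : ∀ w ∈ S, ℓ w ≤ σ) (hσv : σ < ℓ v) (hσs : σ ≤ s) (hsv : s ≤ ℓ v) :
    convexHull ℝ (insert v S) ∩ ℓ ⁻¹' {s} =
      AffineMap.homothety v ((ℓ v - s) / (ℓ v - σ)) ''
        (convexHull ℝ (insert v S) ∩ ℓ ⁻¹' {σ}) := by
  have hσv' : ℓ v - σ ≠ 0 := by linarith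
  have hconv := convex_convexHull ℝ (insert v S)
  have hv : v ∈ convexHull ℝ (insert v S) := subset_convexHull ℝ _ (mem_insert v S)
  ext x
  constructor
  · rintro ⟨hx, hxs⟩
    rw [convexHull_insert hS, convexJoin_singleton_left, mem_iUnion₂] at hx
    obtain ⟨z, hz, hxz⟩ := hx
    have hzσ : ℓ z ≤ σ := ℓ.le_of_mem_convexHull hSσ hz
    have hz' : z ∈ convexHull ℝ (insert v S) := convexHull_mono (subset_insert v S) hz
    rw [segment_eq_image_lineMap] at hxz
    obtain ⟨t, -, rfl⟩ := hxz
    rw [mem_preimage, mem_singleton_iff, ℓ.apply_lineMap_eq] at hxs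
    have hzv : 0 < ℓ v - ℓ z := by linarith
    refine ⟨AffineMap.lineMap v z ((ℓ v - σ) / (ℓ v - ℓ z)), ⟨hconv.lineMap_mem hv hz'
      ⟨div_nonneg (by linarith) hzv.le, (div_le_one hzv).2 (by linarith)⟩, ?_⟩, ?_⟩
    · rw [mem_preimage, mem_singleton_iff, ℓ.apply_lineMap_eq]
      field_simp
      ring
    · rw [← AffineMap.homothety_eq_lineMap, ← AffineMap.homothety_mul_apply,
        AffineMap.homothety_eq_lineMap, ← hxs]
      congr 1
      field_simp
      ring
  · rintro ⟨y, ⟨hy, hyσ⟩, rfl⟩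
    rw [mem_preimage, mem_singleton_iff] at hyσ
    refine ⟨?_, ?_⟩
    · rw [AffineMap.homothety_eq_lineMap]
      exact hconv.lineMap_mem hv hy
        ⟨div_nonneg (by linarith) (by linarith), (div_le_one (by linarith)).2 (by linarith)⟩
    · rw [mem_preimage, mem_singleton_iff, AffineMap.homothety_eq_lineMap, ℓ.apply_lineMap_eq,
        hyσ]
      field_simp
      ring

theorem sdiff_singleton_nonempty_of_neg_mem_convexHull {E : Type*} [AddCommGroup E]
    [Module ℝ E] {V : Set E} {v : E} (hneg : -v ∈ convexHull ℝ V) (hv : v ≠ 0) :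
    (V \ {v}).Nonempty := by
  by_contra! hempty
  have hsub : convexHull ℝ V ⊆ {v} := by
    rw [← convexHull_singleton (𝕜 := ℝ) v]
    exact convexHull_mono (Set.sdiff_eq_empty.1 hempty)
  have h2v : (2 : ℝ) • v = 0 := by rw [two_smul, ← neg_eq_iff_add_eq_zero.1 (hsub hneg)]
  exact hv ((smul_eq_zero.1 h2v).resolve_left two_ne_zero)

theorem MeasureTheory.hausdorffMeasure_homothety_image_of_nonneg {E : Type*}
    [NormedAddCommGroup E] [NormedSpace ℝ E] [MeasurableSpace E] [BorelSpace E] {d : ℝ}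
    (hd : 0 < d) (x : E) {c : ℝ} (hc : 0 ≤ c) (s : Set E) :
    μH[d] (AffineMap.homothety x c '' s) = ‖c‖₊ ^ d • μH[d] s := by
  rcases hc.eq_or_lt with rfl | hc
  · have := Measure.nullSingletonClass_hausdorff E hd
    rw [nnnorm_zero, NNReal.zero_rpow hd.ne', zero_smul]
    refine measure_mono_null (fun y hy => ?_) (measure_singleton x)
    obtain ⟨z, -, rfl⟩ := hy
    simp
  · exact hausdorffMeasure_homothety_image hd.le x hc.ne' s

theorem MeasureTheory.Measure.hausdorffMeasure_zero_image_of_subsingleton {X Y : Type*}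
    [EMetricSpace X] [EMetricSpace Y] [MeasurableSpace X] [BorelSpace X] [MeasurableSpace Y]
    [BorelSpace Y] (f : X → Y) {A : Set X} (hA : A.Subsingleton) :
    μH[0] (f '' A) = μH[0] A := by
  rcases hA.eq_empty_or_singleton with rfl | ⟨a, rfl⟩ <;> simp

theorem subsingleton_setOf_inner_eq {E : Type*} [NormedAddCommGroup E] [InnerProductSpace ℝ E]
    (hE : Module.finrank ℝ E = 1) {θ : E} (hθ : θ ≠ 0) (t : ℝ) :
    {x : E | ⟪x, θ⟫ = t}.Subsingleton := by
  intro x hx y hy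
  obtain ⟨c, hc⟩ := (finrank_eq_one_iff_of_nonzero' θ hθ).1 hE (x - y)
  have hcθ : c * ⟪θ, θ⟫ = 0 := by
    rw [← real_inner_smul_left, hc, inner_sub_left, hx, hy, sub_self]
  obtain rfl : c = 0 := by simpa [hθ] using hcθ
  rw [← sub_eq_zero, ← hc, zero_smul]

theorem sliceVol_eq_mul_of_eq_homothety_image {n : ℕ} {K : Set (Euc n)} {θ : Euc n} (hθ : θ ≠ 0)
    {s σ c : ℝ} (v : Euc n) (hc : 0 ≤ c)
    (h : K ∩ {x | ⟪x, θ⟫ = s} = AffineMap.homothety v c '' (K ∩ {x | ⟪x, θ⟫ = σ})) :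
    sliceVol K θ s = sliceVol K θ σ * c ^ (n - 1) := by
  rcases Nat.lt_or_ge n 2 with hn | hn
  · obtain rfl : n = 1 := by
      have : n ≠ 0 := by rintro rfl; exact hθ (Subsingleton.elim _ _)
      omega
    have hA : (K ∩ {x | ⟪x, θ⟫ = σ}).Subsingleton :=
      (subsingleton_setOf_inner_eq finrank_euclideanSpace_fin hθ σ).anti inter_subset_right
    rw [sliceVol, sliceVol, h, Nat.cast_one, sub_self,
      Measure.hausdorffMeasure_zero_image_of_subsingleton _ hA, pow_zero, mul_one]
  · have hd : (0 : ℝ) < n - 1 := by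
      have : (2 : ℝ) ≤ n := by exact_mod_cast hn
      linarith
    rw [sliceVol, sliceVol, h, hausdorffMeasure_homothety_image_of_nonneg hd v hc,
      ENNReal.toReal_smul, NNReal.smul_def, smul_eq_mul, mul_comm, NNReal.coe_rpow, coe_nnnorm,
      Real.norm_of_nonneg hc, ← Nat.cast_one, ← Nat.cast_sub (by omega), Real.rpow_natCast]

theorem suppFn_convexHull_eq {n : ℕ} {V : Set (Euc n)} {θ v : Euc n} (hv : v ∈ V)
    (hmax : ∀ w ∈ V, ⟪w, θ⟫ ≤ ⟪v, θ⟫) : suppFn (convexHull ℝ V) θ = ⟪v, θ⟫ :=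
  IsGreatest.csSup_eq ⟨⟨v, subset_convexHull ℝ V hv, rfl⟩, by
    rintro _ ⟨x, hx, rfl⟩
    exact inner_le_of_mem_convexHull hmax hx⟩

theorem inner_nonneg_of_neg_mem_convexHull {E : Type*} [NormedAddCommGroup E]
    [InnerProductSpace ℝ E] {V : Set E} {θ v : E} (hmax : ∀ w ∈ V, ⟪w, θ⟫ ≤ ⟪v, θ⟫)
    (hneg : -v ∈ convexHull ℝ V) : 0 ≤ ⟪v, θ⟫ := by
  have := inner_le_of_mem_convexHull hmax hneg
  rw [inner_neg_left] at this
  linarith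

section gCount

variable {n : ℕ} {V : Finset (Euc n)} {θ v : Euc n} {s₀ s : ℝ}

theorem gCount_eq_one_iff_of_mem (hv : v ∈ V) (hs : s ≤ ⟪v, θ⟫) :
    gCount V θ s = 1 ↔ ∀ w ∈ V, w ≠ v → ⟪w, θ⟫ < s := by
  rw [gCount, Set.ncard_eq_one]
  constructor
  · rintro ⟨a, ha⟩ w hw hwv
    by_contra! hsw
    have hva : v ∈ ({a} : Set (Euc n)) := ha ▸ ⟨hv, hs⟩
    have hwa : w ∈ ({a} : Set (Euc n)) := ha ▸ ⟨hw, hsw⟩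
    exact hwv (hwa.trans hva.symm)
  · intro h
    refine ⟨v, Set.eq_singleton_iff_unique_mem.2 ⟨⟨hv, hs⟩, fun w ⟨hw, hsw⟩ => ?_⟩⟩
    by_contra hwv
    exact (h w hw hwv).not_ge hsw

theorem exists_of_gCount_eq_one (h : gCount V θ s = 1) :
    ∃ v ∈ V, s ≤ ⟪v, θ⟫ ∧ ∀ w ∈ V, w ≠ v → ⟪w, θ⟫ < s := by
  obtain ⟨a, ha⟩ := Set.ncard_eq_one.1 h
  have ⟨hav, has⟩ : a ∈ {v ∈ (V : Set (Euc n)) | s ≤ ⟪v, θ⟫} := ha ▸ rfl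
  exact ⟨a, hav, has, (gCount_eq_one_iff_of_mem hav has).1 h⟩

theorem sTheta_eq_zero (hV : ∀ w ∈ V, ⟪w, θ⟫ ≤ 0) : sTheta V θ = 0 := by
  suffices {s | 0 < s ∧ gCount V θ s = 1} = ∅ by rw [sTheta, this, Real.sInf_empty]
  refine Set.eq_empty_of_forall_notMem fun s ⟨hs, h⟩ => ?_
  obtain ⟨v, hv, hsv, -⟩ := exists_of_gCount_eq_one h
  linarith [hV v hv]

theorem exists_pos_lt_gCount_eq_one (hv : v ∈ V) (hs₀ : s₀ < ⟪v, θ⟫) (hpos : 0 < ⟪v, θ⟫)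
    (hother : ∀ w ∈ V, w ≠ v → ⟪w, θ⟫ < s₀) :
    ∃ s ∈ {s | 0 < s ∧ gCount V θ s = 1}, s < ⟪v, θ⟫ := by
  refine ⟨max s₀ (⟪v, θ⟫ / 2), ⟨by positivity, ?_⟩, max_lt hs₀ (by linarith)⟩
  exact (gCount_eq_one_iff_of_mem hv (max_le hs₀.le (by linarith))).2
    fun w hw hwv => (hother w hw hwv).trans_le (le_max_left _ _)

theorem sTheta_lt (hv : v ∈ V) (hs₀ : s₀ < ⟪v, θ⟫) (hpos : 0 < ⟪v, θ⟫)
    (hother : ∀ w ∈ V, w ≠ v → ⟪w, θ⟫ < s₀) : sTheta V θ < ⟪v, θ⟫ := by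
  obtain ⟨s, hs, hsv⟩ := exists_pos_lt_gCount_eq_one hv hs₀ hpos hother
  exact (csInf_le ⟨0, fun t ht => ht.1.le⟩ hs).trans_lt hsv

theorem inner_le_sTheta (hv : v ∈ V) (hs₀ : s₀ < ⟪v, θ⟫) (hpos : 0 < ⟪v, θ⟫)
    (hother : ∀ w ∈ V, w ≠ v → ⟪w, θ⟫ < s₀) {w : Euc n} (hw : w ∈ V) (hwv : w ≠ v) :
    ⟪w, θ⟫ ≤ sTheta V θ := by
  obtain ⟨s, hs, -⟩ := exists_pos_lt_gCount_eq_one hv hs₀ hpos hother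
  refine le_csInf ⟨s, hs⟩ fun t ht => ?_
  obtain ⟨u, hu, htu, huniq⟩ := exists_of_gCount_eq_one ht.2
  by_cases hwu : w = u
  · subst hwu
    linarith [hother w hw hwv, huniq v hv hwv.symm]
  · exact (huniq w hw hwu).le

end gCount

theorem stmt9_general {n : ℕ} (K : Set (Euc n)) (V : Finset (Euc n))
    (hKV : K = convexHull ℝ (V : Set (Euc n)))
    (hsymm : ∀ x ∈ K, -x ∈ K)
    (θ : Euc n) (hθ : θ ∈ goodSet K V) :
    ∀ s : ℝ, sTheta V θ ≤ s → s ≤ suppFn K θ →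
      sliceVol K θ s = sliceVol K θ (sTheta V θ) *
        ((1 - s / suppFn K θ) / (1 - sTheta V θ / suppFn K θ)) ^ (n - 1) := by
  intro s hσs hsh
  obtain ⟨hθ1, s₀, hs₀, hg⟩ := hθ
  obtain ⟨v, hvV, hs₀v, hother⟩ := exists_of_gCount_eq_one hg
  have hvmax : ∀ w ∈ V, ⟪w, θ⟫ ≤ ⟪v, θ⟫ := fun w hw =>
    if hwv : w = v then hwv ▸ le_rfl else ((hother w hw hwv).trans_le hs₀v).le
  rw [hKV, suppFn_convexHull_eq hvV hvmax] at hs₀ hsh ⊢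
  have hneg : -v ∈ convexHull ℝ (V : Set (Euc n)) :=
    hKV ▸ hsymm v (hKV ▸ subset_convexHull ℝ _ hvV)
  rcases (inner_nonneg_of_neg_mem_convexHull hvmax hneg).eq_or_lt with hzero | hpos
  · -- `h_K(θ) = 0`: no `s > 0` has `g(θ, s) = 1`, and `sInf ∅ = 0`
    have hσ := sTheta_eq_zero fun w hw => hzero ▸ hvmax w hw
    obtain rfl : s = 0 := by linarith
    simp [hσ, ← hzero]
  have hσv := sTheta_lt hvV hs₀ hpos hother
  have hcone : convexHull ℝ V ∩ {x | ⟪x, θ⟫ = s} =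
      AffineMap.homothety v ((⟪v, θ⟫ - s) / (⟪v, θ⟫ - sTheta V θ)) ''
        (convexHull ℝ V ∩ {x | ⟪x, θ⟫ = sTheta V θ}) := by
    rw [← Set.insert_eq_of_mem (Finset.mem_coe.2 hvV), ← Set.insert_sdiff_singleton]
    exact convexHull_insert_inter_level_eq_homothety_image ((innerₗ (Euc n)).flip θ)
      (sdiff_singleton_nonempty_of_neg_mem_convexHull hneg (by rintro rfl; simp at hpos))
      (fun w ⟨hw, hwv⟩ => inner_le_sTheta hvV hs₀ hpos hother hw hwv) hσv hσs hsh
  rw [sliceVol_eq_mul_of_eq_homothety_image (by rintro rfl; simp at hθ1) v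
    (div_nonneg (by linarith) (by linarith)) hcone]
  congr 2
  field_simp

/-- For a symmetric convex polytope `K`, `θ ∈ G_K` and `s_θ ≤ s ≤ h_K(θ)`:
`f_{K,θ}(s) = f_{K,θ}(s_θ) ((1 - s/h_K(θ))/(1 - s_θ/h_K(θ)))^{n-1}`. -/
theorem stmt9 {n : ℕ} (K : Set (Euc n)) (V : Finset (Euc n))
    (hKV : K = convexHull ℝ (V : Set (Euc n)))
    (hVext : (V : Set (Euc n)) = K.extremePoints ℝ)
    (hsymm : ∀ x ∈ K, -x ∈ K)
    (θ : Euc n) (hθ : θ ∈ goodSet K V) :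
    ∀ s : ℝ, sTheta V θ ≤ s → s ≤ suppFn K θ →
      sliceVol K θ s = sliceVol K θ (sTheta V θ) *
        ((1 - s / suppFn K θ) / (1 - sTheta V θ / suppFn K θ)) ^ (n - 1) :=
  stmt9_general K V hKV hsymm θ hθ
end
end
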